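/- arXiv:2104.15080 — 4 statements merged into one kernel-verified Lean document; each statement's English description precedes it below -/
import Mathlib

section
/- Let P be a d-dimensional lattice polytope in ℝ^d with interior lattice points that has a facet F whose lattice distance to the set of interior lattice points of P is at least 2. Then P admits no unimodular triangulation Δ such that the subcomplex of Δ induced on (∂P) ∩ ℤ^d is a triangulation of ∂P. -/
open scoped BigOperators Pointwise

/-- A point of `ℝ^d` is a *lattice point* if all its coordinates are integers. -/
def IsLatticePt {d : ℕ} (x : Fin d → ℝ) : Prop := ∀ i, ∃ n : ℤ, x i = (n : ℝ)

/-- A *polytope* in `ℝ^d` is the convex hull of a finite point set. -/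
def IsPolytope {d : ℕ} (P : Set (Fin d → ℝ)) : Prop :=
  ∃ V : Finset (Fin d → ℝ), P = convexHull ℝ (V : Set (Fin d → ℝ))

/-- A *lattice polytope* in `ℝ^d`: the convex hull of finitely many lattice points. -/
def IsLatticePolytope {d : ℕ} (P : Set (Fin d → ℝ)) : Prop :=
  ∃ V : Finset (Fin d → ℝ), (∀ v ∈ V, IsLatticePt v) ∧ P = convexHull ℝ (V : Set (Fin d → ℝ))

/-- Full-dimensional (`d`-dimensional) subset of `ℝ^d`: nonempty interior. -/
def IsFullDim {d : ℕ} (P : Set (Fin d → ℝ)) : Prop := (interior P).Nonempty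

/-- `F` is a *facet* of the (full-dimensional) polytope `P` : the intersection of `P`
with a supporting hyperplane, of affine dimension `d - 1`. -/
def IsFacet {d : ℕ} (P F : Set (Fin d → ℝ)) : Prop :=
  ∃ (a : Fin d → ℝ) (c : ℝ), a ≠ 0 ∧ (∀ x ∈ P, (∑ i, a i * x i) ≤ c) ∧
    F = {x ∈ P | (∑ i, a i * x i) = c} ∧
    Module.finrank ℝ (affineSpan ℝ F).direction = d - 1

/-- Extend `y ∈ ℝ^d` to `Fin (d+1)` by the convention `y₀ = 0`. -/
def extCoord {d : ℕ} (y : Fin d → ℝ) : Fin (d + 1) → ℝ := Fin.cons 0 y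

/-- An *alcove hyperplane* in `ℝ^d`: `{y : y_i - y_j = k}` for integer `k` and
indices `i j ∈ {0, 1, …, d}`, with the convention `y₀ = 0`. -/
def IsAlcoveHyperplane {d : ℕ} (H : Set (Fin d → ℝ)) : Prop :=
  ∃ (i j : Fin (d + 1)) (k : ℤ), i ≠ j ∧
    H = {y : Fin d → ℝ | extCoord y i - extCoord y j = (k : ℝ)}

/-- A `d`-dimensional polytope in `ℝ^d` is an *alcoved polytope* if all of its
facet-defining hyperplanes are alcove hyperplanes. -/
def IsAlcovedPolytope {d : ℕ} (P : Set (Fin d → ℝ)) : Prop :=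
  IsPolytope P ∧ IsFullDim P ∧
    ∀ F, IsFacet P F → ∃ H, IsAlcoveHyperplane H ∧ F ⊆ H

/-- The set of interior lattice points of `P`, as points of `ℤ^d`. -/
def interiorLatticePts {d : ℕ} (P : Set (Fin d → ℝ)) : Set (Fin d → ℤ) :=
  {p | (fun i => (p i : ℝ)) ∈ interior P}

/-- Lattice distance between the hyperplane `{x | a·x = b}` (with `a ∈ ℤ^d`, `b ∈ ℤ`)
and a lattice point `p`: it is `0` if `p` lies on the hyperplane and otherwise `n + 1`,
where `n` is the number of parallel translates of the hyperplane through lattice points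
strictly between `p` and the hyperplane. -/
noncomputable def latticeDistAux {d : ℕ} (a : Fin d → ℤ) (b : ℤ) (p : Fin d → ℤ) : ℕ :=
  if (∑ i, a i * p i) = b then 0
  else Nat.card {c : ℤ // (∃ q : Fin d → ℤ, (∑ i, a i * q i) = c) ∧
      min (∑ i, a i * p i) b < c ∧ c < max (∑ i, a i * p i) b} + 1

/-- Lattice distance between a rational hyperplane `H ⊆ ℝ^d` (given as a set) and a
lattice point `p`. -/
noncomputable def hyperplaneLatticeDist {d : ℕ} (H : Set (Fin d → ℝ)) (p : Fin d → ℤ) : ℕ :=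
  sInf {n : ℕ | ∃ (a : Fin d → ℤ) (b : ℤ), a ≠ 0 ∧
    H = {x : Fin d → ℝ | (∑ i, (a i : ℝ) * x i) = (b : ℝ)} ∧ n = latticeDistAux a b p}

/-- Lattice distance of a facet `F` to a set `S` of lattice points: the minimum over
`p ∈ S` of the lattice distance between `aff F` and `p`. -/
noncomputable def facetLatticeDistSet {d : ℕ} (F : Set (Fin d → ℝ)) (S : Set (Fin d → ℤ)) : ℕ :=
  sInf {n : ℕ | ∃ p ∈ S, hyperplaneLatticeDist ((affineSpan ℝ F : AffineSubspace ℝ (Fin d → ℝ)) : Set (Fin d → ℝ)) p = n}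

/-- Number of lattice points in the `t`-th dilate of `P`. -/
noncomputable def latCount {d : ℕ} (P : Set (Fin d → ℝ)) (t : ℕ) : ℕ :=
  Nat.card {p : Fin d → ℤ // (fun i => (p i : ℝ)) ∈ (t : ℝ) • P}

/-- `h` is the `h^*`-vector of the `d`-dimensional lattice polytope `P ⊆ ℝ^d`:
the (unique) coefficient vector with
`Ehr_P(z) = (h₀ + h₁ z + … + h_d z^d)/(1-z)^{d+1}`, expressed equivalently by
`L_P(t) = ∑ i, h_i * C(t + d - i, d)` for all `t ≥ 1`. -/
def IsHStarVector {d : ℕ} (P : Set (Fin d → ℝ)) (h : Fin (d + 1) → ℤ) : Prop :=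
  ∀ t : ℕ, 1 ≤ t →
    (latCount P t : ℤ) = ∑ i : Fin (d + 1), h i * (Nat.choose (t + d - (i : ℕ)) d : ℤ)

/-- A finite sequence is *unimodal* if it first weakly increases, then weakly decreases. -/
def Unimodal {n : ℕ} (s : Fin n → ℤ) : Prop :=
  ∃ k : Fin n, (∀ i j : Fin n, i ≤ j → j ≤ k → s i ≤ s j) ∧
    (∀ i j : Fin n, k ≤ i → i ≤ j → s j ≤ s i)

/-- `K` is a triangulation of the lattice polytope `P`, i.e. a triangulation of the
point configuration `P ∩ ℤ^d`: a simplicial complex with vertices among the lattice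
points of `P` covering `P`. -/
def IsTriangulationOf {d : ℕ} (K : Geometry.SimplicialComplex ℝ (Fin d → ℝ))
    (P : Set (Fin d → ℝ)) : Prop :=
  K.space = P ∧ ∀ s ∈ K.faces, ∀ x ∈ s, x ∈ P ∧ IsLatticePt x

/-- The lattice `ℤ^d` inside `ℝ^d`, as a `ℤ`-submodule. -/
def latticeSubmodule (d : ℕ) : Submodule ℤ (Fin d → ℝ) :=
  Submodule.span ℤ (Set.range fun i : Fin d => (Pi.single i 1 : Fin d → ℝ))

/-- A full-dimensional lattice simplex (given by its vertex set `s`, `|s| = d+1`) is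
*unimodular* if the differences of its vertices with one of them form a `ℤ`-basis of
`ℤ^d`, i.e. they span the lattice `ℤ^d` over `ℤ`. -/
def IsUnimodularSimplex {d : ℕ} (s : Finset (Fin d → ℝ)) : Prop :=
  s.card = d + 1 ∧ (∀ x ∈ s, IsLatticePt x) ∧
    ∃ v ∈ s, Submodule.span ℤ ((fun x => x - v) '' (s : Set (Fin d → ℝ))) = latticeSubmodule d

/-- A *unimodular triangulation* of `P`: all full-dimensional simplices are unimodular. -/
def IsUnimodularTriangulation {d : ℕ} (K : Geometry.SimplicialComplex ℝ (Fin d → ℝ))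
    (P : Set (Fin d → ℝ)) : Prop :=
  IsTriangulationOf K P ∧ ∀ s ∈ K.faces, s.card = d + 1 → IsUnimodularSimplex s

/-- The subcomplex of `K` induced on the boundary lattice points `(∂P) ∩ ℤ^d`
(i.e. all faces of `K` whose vertices lie in `∂P`) is a triangulation of `∂P`,
i.e. it covers `∂P`. -/
def BoundaryInducedIsTriangulation {d : ℕ} (K : Geometry.SimplicialComplex ℝ (Fin d → ℝ))
    (P : Set (Fin d → ℝ)) : Prop :=
  (⋃ s ∈ {s ∈ K.faces | ∀ x ∈ s, x ∈ frontier P},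
      convexHull ℝ (s : Set (Fin d → ℝ))) = frontier P

/-- `K` is a *regular* triangulation of `P`: there is a height function `w` on the
lattice points of `P` whose lower convex hull projects to `K`; equivalently every face
of `K` is the domain of equality of an affine functional lying strictly below the lift
of all other lattice points of `P`. -/
def IsRegularTriangulation {d : ℕ} (K : Geometry.SimplicialComplex ℝ (Fin d → ℝ))
    (P : Set (Fin d → ℝ)) : Prop :=
  ∃ w : (Fin d → ℝ) → ℝ, ∀ s ∈ K.faces,
    ∃ ℓ : (Fin d → ℝ) →ᵃ[ℝ] ℝ, (∀ x ∈ s, ℓ x = w x) ∧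
      ∀ x : Fin d → ℝ, IsLatticePt x → x ∈ P → x ∉ s → ℓ x < w x

/-- The union of all alcove hyperplanes in `ℝ^d`. -/
def alcoveUnion (d : ℕ) : Set (Fin d → ℝ) := {y | ∃ H, IsAlcoveHyperplane H ∧ y ∈ H}

/-- The polytope `Q_d = {y ∈ ℝ^d : y_i - y_j ≤ 1 for all 0 ≤ i, j ≤ d}` (with `y₀ = 0`),
the minimal-volume alcoved polytope with the origin in its interior. -/
def Qd (d : ℕ) : Set (Fin d → ℝ) :=
  {y | ∀ i j : Fin (d + 1), extCoord y i - extCoord y j ≤ 1}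

/-!
Pick a point `x₀` of the facet `F` outside every face of the triangulation with fewer than `d`
vertices. Since `P` is the closure of its interior and the faces with at most `d` vertices are
nowhere dense, `x₀` lies in a full-dimensional simplex `t`, and the vertices of `t` on `aff F`
form a facet of `t` spanning `aff F`. If every vertex of `t` were on `∂P`, the boundary condition
would put the full-dimensional `conv t` inside `∂P`; so the remaining vertex `v` is interior.
Unimodularity of `t` makes the barycentric coordinate of `v` an integral affine function, so `v`
is an interior lattice point at lattice distance `1` from `aff F`.
-/

open Geometry Module Set

section ConvexGeometry

variable {E : Type*} [NormedAddCommGroup E] [NormedSpace ℝ E]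

theorem affineSpan_ne_top_of_card_le {u : Finset E} (hu : u.card ≤ finrank ℝ E) :
    affineSpan ℝ (u : Set E) ≠ ⊤ := by
  classical
  intro htop
  obtain ⟨x, hx⟩ : u.Nonempty := by
    by_contra h
    simp [Finset.not_nonempty_iff_eq_empty.1 h] at htop
  have := finrank_vectorSpan_image_finset_le ℝ id u (n := u.card - 1)
    (by have := Finset.card_pos.2 ⟨x, hx⟩; omega)
  rw [Finset.image_id, AffineSubspace.vectorSpan_eq_top_of_affineSpan_eq_top ℝ E E htop,
    finrank_top] at this
  have := Finset.card_pos.2 ⟨x, hx⟩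
  omega

theorem dense_compl_biUnion_convexHull [FiniteDimensional ℝ E] {U : Set (Finset E)}
    (hU : U.Countable) (hcard : ∀ u ∈ U, u.card ≤ finrank ℝ E) :
    Dense (⋃ u ∈ U, convexHull ℝ (u : Set E))ᶜ := by
  rw [compl_iUnion₂]
  refine dense_biInter_of_isOpen
    (fun u _ => (u.finite_toSet.isClosed_convexHull (𝕜 := ℝ)).isOpen_compl) hU fun u hu => ?_
  rw [← interior_eq_empty_iff_dense_compl, ← not_nonempty_iff_eq_empty,
    interior_convexHull_nonempty_iff_affineSpan_eq_top]
  exact affineSpan_ne_top_of_card_le (hcard u hu)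

theorem Convex.exists_mem_forall_notMem_convexHull [FiniteDimensional ℝ E] {S : Set E}
    (hS : Convex ℝ S) (hne : S.Nonempty) {U : Set (Finset E)} (hU : U.Countable)
    (hcard : ∀ u ∈ U, u.card ≤ finrank ℝ (affineSpan ℝ S).direction) :
    ∃ x ∈ S, ∀ u ∈ U, x ∉ convexHull ℝ (u : Set E) := by
  classical
  -- `L` restricts to the identity on the direction of `aff S`, so `L '' S` is full-dimensional.
  set W := (affineSpan ℝ S).direction
  obtain ⟨L, hL⟩ := W.subtype.exists_leftInverse_of_injective W.ker_subtype
  have hLW : W.map L = ⊤ := by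
    refine eq_top_iff.2 fun w _ => ⟨w, w.2, ?_⟩
    simpa using LinearMap.congr_fun hL w
  have hint : (interior (L '' S)).Nonempty := by
    rw [(hS.linear_image L).interior_nonempty_iff_affineSpan_eq_top, ← LinearMap.coe_toAffineMap,
      ← AffineSubspace.map_span, ← AffineSubspace.direction_eq_top_iff_of_nonempty
        ((hne.affineSpan ℝ).image _), AffineSubspace.map_direction]
    exact hLW
  obtain ⟨_, ⟨x, hxS, rfl⟩, hxU⟩ := ((dense_compl_biUnion_convexHull (hU.image (Finset.image L))
    (by
      rintro _ ⟨u, hu, rfl⟩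
      exact Finset.card_image_le.trans (hcard u hu))).inter_open_nonempty _ isOpen_interior
    hint).mono (inter_subset_inter_left _ interior_subset)
  refine ⟨x, hxS, fun u hu hxu => hxU (mem_iUnion₂.2 ⟨u.image L, mem_image_of_mem _ hu, ?_⟩)⟩
  rw [Finset.coe_image, ← L.image_convexHull]
  exact mem_image_of_mem L hxu

theorem mem_convexHull_filter_of_forall_le {t : Finset E} {g : E →ₗ[ℝ] ℝ} {c : ℝ}
    (hle : ∀ y ∈ t, g y ≤ c) {x : E} (hx : x ∈ convexHull ℝ (t : Set E)) (hxc : g x = c) :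
    x ∈ convexHull ℝ (t.filter (g · = c) : Set E) := by
  classical
  obtain ⟨w, hw0, hw1, rfl⟩ := Finset.mem_convexHull'.1 hx
  have hslack : ∑ y ∈ t, w y * (c - g y) = 0 := by
    simp only [mul_sub, Finset.sum_sub_distrib, ← Finset.sum_mul, hw1, ← hxc, map_sum, map_smul,
      smul_eq_mul, one_mul, sub_self]
  have hw : ∀ y ∈ t, y ∉ t.filter (g · = c) → w y = 0 := fun y hy hyc =>
    (mul_eq_zero.1 ((Finset.sum_eq_zero_iff_of_nonneg fun z hz =>
      mul_nonneg (hw0 z hz) (sub_nonneg.2 (hle z hz))).1 hslack y hy)).resolve_right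
      (sub_ne_zero.2 fun h => hyc (Finset.mem_filter.2 ⟨hy, h.symm⟩))
  rw [← Finset.sum_subset (Finset.filter_subset _ t) fun y hy hyc => by rw [hw y hy hyc, zero_smul]]
  rw [← Finset.sum_subset (Finset.filter_subset _ t) hw] at hw1
  exact (Finset.mem_convexHull'.2 ⟨w, fun y hy => hw0 y (Finset.mem_filter.1 hy).1, hw1, rfl⟩)

theorem lt_of_mem_interior_of_forall_le [FiniteDimensional ℝ E] {P : Set E} {g : E →ₗ[ℝ] ℝ}
    (hg : g ≠ 0) {c : ℝ} (hle : ∀ y ∈ P, g y ≤ c) {x : E} (hx : x ∈ interior P) : g x < c := by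
  have hopen : IsOpen (g '' interior P) :=
    g.isOpenMap_of_finiteDimensional (LinearMap.surjective_of_ne_zero hg) _ isOpen_interior
  have hsub : g '' interior P ⊆ Iic c := by
    rintro _ ⟨y, hy, rfl⟩
    exact hle y (interior_subset hy)
  simpa using interior_maximal hsub hopen ⟨x, hx, rfl⟩

theorem Geometry.SimplicialComplex.exists_card_eq_mem_convexHull [FiniteDimensional ℝ E]
    (K : SimplicialComplex ℝ E) (hK : K.faces.Finite) {x : E}
    (hx : x ∈ closure (interior K.space)) :
    ∃ t ∈ K.faces, t.card = finrank ℝ E + 1 ∧ x ∈ convexHull ℝ (t : Set E) := by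
  set A := ⋃ t ∈ {t ∈ K.faces | t.card = finrank ℝ E + 1}, convexHull ℝ (t : Set E)
  set M := ⋃ u ∈ {u ∈ K.faces | u.card ≤ finrank ℝ E}, convexHull ℝ (u : Set E)
  have hA : IsClosed A := (hK.subset (sep_subset _ _)).isClosed_biUnion fun t _ =>
    t.finite_toSet.isClosed_convexHull (𝕜 := ℝ)
  have hsub : interior K.space ∩ Mᶜ ⊆ A := by
    rintro y ⟨hy, hyM⟩
    obtain ⟨t, htK, hyt⟩ := K.mem_space_iff.1 (interior_subset hy)
    have hle := (K.indep htK).card_le_finrank_succ.trans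
      (Nat.succ_le_succ (Submodule.finrank_le _))
    rw [Fintype.card_coe] at hle
    refine mem_iUnion₂.2 ⟨t, ⟨htK, ?_⟩, hyt⟩
    by_contra hne
    exact hyM (mem_iUnion₂.2 ⟨t, ⟨htK, by omega⟩, hyt⟩)
  have hdense : Dense Mᶜ :=
    dense_compl_biUnion_convexHull (hK.subset (sep_subset _ _)).countable fun u hu => hu.2
  have hclosure : closure (interior K.space) ⊆ A := closure_minimal
    ((hdense.open_subset_closure_inter isOpen_interior).trans
      (closure_minimal hsub hA)) hA
  obtain ⟨t, ⟨htK, htcard⟩, hxt⟩ := mem_iUnion₂.1 (hclosure hx)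
  exact ⟨t, htK, htcard, hxt⟩

theorem AffineIndependent.exists_affineMap_coe_affineSpan_erase [FiniteDimensional ℝ E]
    [DecidableEq E] {t : Finset E} (hind : AffineIndependent ℝ ((↑) : t → E))
    (hcard : t.card = finrank ℝ E + 1)
    {v w : E} (hv : v ∈ t) (hw : w ∈ t.erase v) :
    ∃ f : E →ᵃ[ℝ] ℝ, f v = 1 ∧ (affineSpan ℝ (t.erase v : Set E) : Set E) = {x | f x = 0} := by
  let b : AffineBasis t ℝ E := ⟨(↑), hind, by
    rw [hind.affineSpan_eq_top_iff_card_eq_finrank_add_one, Fintype.card_coe, hcard]⟩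
  set f := b.coord ⟨v, hv⟩
  have hf : ∀ u (hu : u ∈ t), f u = if u = v then 1 else 0 := fun u hu => by
    show b.coord _ (b ⟨u, hu⟩) = _
    rw [b.coord_apply]
    simp [Subtype.ext_iff, eq_comm]
  obtain ⟨hwv, hwt⟩ := Finset.mem_erase.1 hw
  have hfw : f w = 0 := by simp [hf w hwt, hwv]
  have hfv : f v = 1 := by simp [hf v hv]
  set H := AffineSubspace.mk' w (LinearMap.ker f.linear)
  have hmemH : ∀ x, x ∈ H ↔ f x = 0 := fun x => by
    rw [AffineSubspace.mem_mk', LinearMap.mem_ker, f.linearMap_vsub, hfw, vsub_eq_sub, sub_zero]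
  have hle : affineSpan ℝ (t.erase v : Set E) ≤ H := affineSpan_le.2 fun u hu => by
    obtain ⟨huv, hut⟩ := Finset.mem_erase.1 hu
    exact (hmemH u).2 (by simp [hf u hut, huv])
  have hker : finrank ℝ (LinearMap.ker f.linear) + 1 = finrank ℝ E := by
    have hsurj : LinearMap.range f.linear = ⊤ := LinearMap.range_eq_top.2
      (LinearMap.surjective_of_ne_zero fun h0 => by
        simpa [hfv, hfw, h0] using f.linearMap_vsub v w)
    rw [← LinearMap.finrank_range_add_finrank_ker f.linear, hsurj, finrank_top, finrank_self,
      add_comm]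
  have hspan := (hind.mono (Finset.coe_subset.2 (t.erase_subset v))
    ).affineSpan_eq_of_le_of_card_eq_finrank_add_one (sp := H) (by rwa [Subtype.range_coe]) (by
      simp only [Finset.coe_sort_coe, Fintype.card_coe]
      rw [Finset.card_erase_of_mem hv, AffineSubspace.direction_mk', hker, hcard]
      rfl)
  refine ⟨f, hfv, ?_⟩
  rw [Subtype.range_coe] at hspan
  ext x
  rw [SetLike.mem_coe, hspan, hmemH, mem_ofPred_eq]

end ConvexGeometry

section Lattice

variable {d : ℕ}

theorem latticeSubmodule_eq_span_basisFun :
    latticeSubmodule d = Submodule.span ℤ (range (Pi.basisFun ℝ (Fin d))) := by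
  rw [latticeSubmodule]
  congr
  ext i : 1
  exact (Pi.basisFun_apply ℝ (Fin d) i).symm

theorem isLatticePt_iff_mem_latticeSubmodule {x : Fin d → ℝ} :
    IsLatticePt x ↔ x ∈ latticeSubmodule d := by
  rw [latticeSubmodule_eq_span_basisFun, Module.Basis.mem_span_iff_repr_mem]
  simp [IsLatticePt, eq_comm]

theorem IsLatticePt.exists_eq_intCast {x : Fin d → ℝ} (hx : IsLatticePt x) :
    ∃ p : Fin d → ℤ, x = fun i => (p i : ℝ) :=
  ⟨fun i => (hx i).choose, funext fun i => (hx i).choose_spec⟩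

theorem IsTriangulationOf.faces_finite {K : SimplicialComplex ℝ (Fin d → ℝ)} {P : Set (Fin d → ℝ)}
    (hK : IsTriangulationOf K P) (hP : Bornology.IsBounded P) : K.faces.Finite := by
  classical
  have hA := ZSpan.setFinite_inter (Pi.basisFun ℝ (Fin d)) hP
  refine (hA.toFinset.powerset.finite_toSet).subset fun s hs => ?_
  rw [Finset.mem_coe, Finset.mem_powerset]
  intro x hx
  obtain ⟨hxP, hxlat⟩ := hK.2 s hs x hx
  rw [Set.Finite.mem_toFinset]
  refine ⟨hxP, ?_⟩
  rw [← latticeSubmodule_eq_span_basisFun]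
  exact isLatticePt_iff_mem_latticeSubmodule.1 hxlat

theorem latticeDistAux_eq_one {a : Fin d → ℤ} {b : ℤ} {p : Fin d → ℤ}
    (hp : ∑ i, a i * p i = b + 1) : latticeDistAux a b p = 1 := by
  rw [latticeDistAux, if_neg (by omega), add_eq_right, Nat.card_eq_zero]
  left
  refine ⟨fun ⟨c, _, hlo, hhi⟩ => ?_⟩
  rw [hp] at hlo hhi
  omega

theorem hyperplaneLatticeDist_le_one {a : Fin d → ℤ} (ha : a ≠ 0) {b : ℤ} {p : Fin d → ℤ}
    (hp : ∑ i, a i * p i = b + 1) :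
    hyperplaneLatticeDist {x : Fin d → ℝ | ∑ i, (a i : ℝ) * x i = b} p ≤ 1 :=
  Nat.sInf_le ⟨a, b, ha, rfl, (latticeDistAux_eq_one hp).symm⟩

theorem hyperplaneLatticeDist_empty (p : Fin d → ℤ) :
    hyperplaneLatticeDist (∅ : Set (Fin d → ℝ)) p = 0 := by
  refine Nat.sInf_eq_zero.2 (Or.inr (eq_empty_of_forall_notMem ?_))
  rintro n ⟨a, b, ha, hempty, -⟩
  obtain ⟨i, hi⟩ := Function.ne_iff.1 ha
  have hi' : (a i : ℝ) ≠ 0 := by exact_mod_cast hi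
  have : (Pi.single i ((b : ℝ) / a i) : Fin d → ℝ) ∈
      {x : Fin d → ℝ | ∑ j, (a j : ℝ) * x j = b} := by
    simp [Pi.single_apply, mul_div_cancel₀ _ hi']
  rwa [← hempty] at this

theorem facetLatticeDistSet_le {F : Set (Fin d → ℝ)} {S : Set (Fin d → ℤ)} {p : Fin d → ℤ}
    (hp : p ∈ S) : facetLatticeDistSet F S ≤ hyperplaneLatticeDist (affineSpan ℝ F : Set _) p :=
  Nat.sInf_le ⟨p, hp, rfl⟩

theorem nonempty_of_facetLatticeDistSet_ne_zero {F : Set (Fin d → ℝ)} {S : Set (Fin d → ℤ)}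
    (h : facetLatticeDistSet F S ≠ 0) : S.Nonempty := by
  contrapose! h
  simp [facetLatticeDistSet, h]


theorem IsUnimodularSimplex.hyperplaneLatticeDist_affineSpan_erase_le_one
    {t : Finset (Fin d → ℝ)} (ht : IsUnimodularSimplex t)
    (hind : AffineIndependent ℝ ((↑) : t → Fin d → ℝ)) {p : Fin d → ℤ}
    (hp : (fun i => (p i : ℝ)) ∈ t) (hne : (t.erase fun i => (p i : ℝ)).Nonempty) :
    hyperplaneLatticeDist
      (affineSpan ℝ (t.erase fun i => (p i : ℝ) : Set (Fin d → ℝ)) : Set (Fin d → ℝ)) p ≤ 1 := by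
  obtain ⟨htcard, -, v₀, hv₀, hspan⟩ := ht
  obtain ⟨w, hw⟩ := hne
  -- `f` is the barycentric coordinate of the apex; unimodularity makes its linear part integral.
  obtain ⟨f, hfp, hzero⟩ :=
    hind.exists_affineMap_coe_affineSpan_erase (by simpa using htcard) hp hw
  have hf_erase : ∀ u ∈ t.erase fun i => (p i : ℝ), f u = 0 := fun u hu => by
    have := subset_affineSpan ℝ _ (Finset.mem_coe.2 hu)
    rwa [hzero] at this
  have hft : ∀ u ∈ t, f u ∈ (1 : Submodule ℤ ℝ) := fun u hu => by
    by_cases hup : u = fun i => (p i : ℝ)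
    · rw [hup, hfp]
      exact Submodule.mem_one.2 ⟨1, map_one _⟩
    · rw [hf_erase u (Finset.mem_erase.2 ⟨hup, hu⟩)]
      exact zero_mem _
  have hlin : latticeSubmodule d ≤ (1 : Submodule ℤ ℝ).comap (f.linear.restrictScalars ℤ) := by
    rw [← hspan, Submodule.span_le]
    rintro _ ⟨u, hu, rfl⟩
    show f.linear (u -ᵥ v₀) ∈ (1 : Submodule ℤ ℝ)
    rw [f.linearMap_vsub]
    exact sub_mem (hft u hu) (hft v₀ hv₀)
  choose a ha using fun i => Submodule.mem_one.1 (hlin (Submodule.subset_span ⟨i, rfl⟩))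
  have hflin : ∀ x, f.linear x = ∑ i, (a i : ℝ) * x i := fun x => by
    rw [LinearMap.pi_apply_eq_sum_univ f.linear x]
    refine Finset.sum_congr rfl fun i _ => ?_
    have hsingle : (fun j => if i = j then (1 : ℝ) else 0) = Pi.single i 1 := by
      ext j
      simp [Pi.single_apply, eq_comm]
    rw [hsingle, smul_eq_mul, mul_comm]
    simpa using congrArg (· * x i) (ha i).symm
  have hf : ∀ x, f x = ∑ i, (a i : ℝ) * x i - ∑ i, (a i : ℝ) * p i + 1 := fun x => by
    rw [← hfp, ← hflin, ← hflin, ← map_sub, ← vsub_eq_sub, f.linearMap_vsub, vsub_eq_sub]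
    ring
  have ha0 : a ≠ 0 := by
    rintro rfl
    simpa [hf] using hf_erase w hw
  convert hyperplaneLatticeDist_le_one ha0 (b := ∑ i, a i * p i - 1) (by ring) using 2
  rw [hzero]
  ext x
  simp only [mem_ofPred_eq, hf]
  push_cast
  constructor <;> intro h <;> linarith

end Lattice

section Triangulation

variable {d : ℕ} {K : SimplicialComplex ℝ (Fin d → ℝ)} {P : Set (Fin d → ℝ)}

theorem BoundaryInducedIsTriangulation.exists_mem_interior
    (hbd : BoundaryInducedIsTriangulation K P) (hP : IsClosed P) (hKP : IsTriangulationOf K P)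
    {t : Finset (Fin d → ℝ)} (htK : t ∈ K.faces) (htcard : t.card = d + 1) :
    ∃ v ∈ t, v ∈ interior P := by
  by_contra! h
  have hsub : convexHull ℝ (t : Set (Fin d → ℝ)) ⊆ frontier P := by
    rw [← hbd]
    exact fun y hy => mem_biUnion
      ⟨htK, fun x hx => ⟨subset_closure (hKP.2 t htK x hx).1, h x hx⟩⟩ hy
  obtain ⟨y, hy⟩ : (interior (convexHull ℝ (t : Set (Fin d → ℝ)))).Nonempty := by
    rw [interior_convexHull_nonempty_iff_affineSpan_eq_top]
    simpa using (K.indep htK).affineSpan_eq_top_iff_card_eq_finrank_add_one.2 (by simp [htcard])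
  simpa [interior_frontier hP] using interior_mono hsub hy

theorem IsTriangulationOf.exists_face_affineSpan_erase_eq_of_isFacet
    (hKP : IsTriangulationOf K P) (hK : K.faces.Finite) (hbd : BoundaryInducedIsTriangulation K P)
    (hconv : Convex ℝ P) (hclosed : IsClosed P) (hint : (interior P).Nonempty)
    {F : Set (Fin d → ℝ)} (hF : IsFacet P F) (hFne : F.Nonempty) :
    ∃ t ∈ K.faces, t.card = d + 1 ∧ ∃ v ∈ t, v ∈ interior P ∧ (t.erase v).Nonempty ∧
      affineSpan ℝ (t.erase v : Set (Fin d → ℝ)) = affineSpan ℝ F := by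
  classical
  obtain ⟨a, c, ha, hle, rfl, hrank⟩ := hF
  set g := dotProductEquiv ℝ (Fin d) a
  have hg : g ≠ 0 := (LinearEquiv.map_ne_zero_iff _).2 ha
  have hgle : ∀ y ∈ P, g y ≤ c := hle
  have hFconv : Convex ℝ {x ∈ P | ∑ i, a i * x i = c} :=
    hconv.inter (convex_hyperplane g.isLinear c)
  obtain ⟨x₀, hx₀F, hx₀gen⟩ := hFconv.exists_mem_forall_notMem_convexHull hFne
    (U := {u ∈ K.faces | u.card < d}) (hK.subset (sep_subset _ _)).countable
    fun u hu => by rw [hrank]; have := hu.2; omega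
  obtain ⟨t, htK, htcard, hx₀t⟩ := K.exists_card_eq_mem_convexHull hK (by
    rw [hKP.1, hconv.closure_interior_eq_closure_of_nonempty_interior hint, hclosed.closure_eq]
    exact hx₀F.1)
  rw [finrank_fin_fun] at htcard
  obtain ⟨v, hvt, hvint⟩ := hbd.exists_mem_interior hclosed hKP htK htcard
  set s := t.filter (g · = c)
  have hx₀s : x₀ ∈ convexHull ℝ (s : Set (Fin d → ℝ)) :=
    mem_convexHull_filter_of_forall_le (fun y hy => hgle y (hKP.2 t htK y hy).1) hx₀t hx₀F.2
  have hsne : s.Nonempty := by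
    rw [Finset.nonempty_iff_ne_empty]
    rintro h
    simp [h] at hx₀s
  have hsK : s ∈ K.faces := K.down_closed htK (Finset.filter_subset _ _) hsne
  -- `x₀ ∈ conv s` while `x₀` avoids every face with fewer than `d` vertices.
  have hscard : d ≤ s.card := not_lt.1 fun h => hx₀gen s ⟨hsK, h⟩ hx₀s
  have hvs : v ∉ s := fun h =>
    (lt_of_mem_interior_of_forall_le hg hgle hvint).ne (Finset.mem_filter.1 h).2
  have herase : s = t.erase v := Finset.eq_of_subset_of_card_le
    (fun y hy => Finset.mem_erase.2 ⟨fun h => hvs (h ▸ hy), Finset.filter_subset _ _ hy⟩)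
    (by rw [Finset.card_erase_of_mem hvt]; omega)
  have hs : s.card = d := by
    rw [herase, Finset.card_erase_of_mem hvt, htcard, Nat.add_sub_cancel]
  have hsF : (s : Set (Fin d → ℝ)) ⊆ {x ∈ P | ∑ i, a i * x i = c} := fun y hy =>
    ⟨(hKP.2 t htK y (Finset.mem_filter.1 hy).1).1, (Finset.mem_filter.1 hy).2⟩
  refine ⟨t, htK, htcard, v, hvt, hvint, herase ▸ hsne, ?_⟩
  rw [← herase]
  have := (K.indep hsK).affineSpan_eq_of_le_of_card_eq_finrank_add_one
    (sp := affineSpan ℝ {x ∈ P | ∑ i, a i * x i = c}) (by simpa using affineSpan_mono ℝ hsF) (by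
      have := Finset.card_pos.2 hsne
      simp only [Fintype.card_coe, hrank]
      omega)
  simpa using this

end Triangulation

theorem stmt3_general (d : ℕ) (P : Set (Fin d → ℝ)) (hP : IsLatticePolytope P)
    (F : Set (Fin d → ℝ)) (hF : IsFacet P F)
    (hFdist : 2 ≤ facetLatticeDistSet F (interiorLatticePts P)) :
    ¬ ∃ K : Geometry.SimplicialComplex ℝ (Fin d → ℝ),
        IsUnimodularTriangulation K P ∧ BoundaryInducedIsTriangulation K P := by
  rintro ⟨K, ⟨hKP, huni⟩, hbd⟩
  obtain ⟨p₀, hp₀⟩ :=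
    nonempty_of_facetLatticeDistSet_ne_zero (F := F) (S := interiorLatticePts P) (by omega)
  rcases F.eq_empty_or_nonempty with rfl | hFne
  · have := facetLatticeDistSet_le (F := ∅) hp₀
    rw [AffineSubspace.span_empty, AffineSubspace.bot_coe, hyperplaneLatticeDist_empty] at this
    omega
  obtain ⟨V, -, rfl⟩ := hP
  have hPc : IsCompact (convexHull ℝ (V : Set (Fin d → ℝ))) :=
    V.finite_toSet.isCompact_convexHull (𝕜 := ℝ)
  obtain ⟨t, htK, htcard, v, hvt, hvint, hne, hspan⟩ :=
    hKP.exists_face_affineSpan_erase_eq_of_isFacet (hKP.faces_finite hPc.isBounded) hbd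
      (convex_convexHull ℝ _) hPc.isClosed ⟨_, hp₀⟩ hF hFne
  obtain ⟨p, rfl⟩ := (hKP.2 t htK v hvt).2.exists_eq_intCast
  have hdist :=
    (huni t htK htcard).hyperplaneLatticeDist_affineSpan_erase_le_one (K.indep htK) hvt hne
  rw [hspan] at hdist
  have := facetLatticeDistSet_le (F := F) (show p ∈ interiorLatticePts _ from hvint)
  omega

/-- If a `d`-dimensional lattice polytope `P ⊆ ℝ^d` with interior
lattice points has a facet at lattice distance at least `2` from the set of interior
lattice points, then `P` admits no unimodular triangulation whose induced subcomplex on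
the boundary lattice points triangulates `∂P`. -/
theorem stmt3 (d : ℕ) (P : Set (Fin d → ℝ)) (hP : IsLatticePolytope P) (hdim : IsFullDim P)
    (hint : (interiorLatticePts P).Nonempty)
    (F : Set (Fin d → ℝ)) (hF : IsFacet P F)
    (hFdist : 2 ≤ facetLatticeDistSet F (interiorLatticePts P)) :
    ¬ ∃ K : Geometry.SimplicialComplex ℝ (Fin d → ℝ),
        IsUnimodularTriangulation K P ∧ BoundaryInducedIsTriangulation K P :=
  stmt3_general d P hP F hF hFdist
end

section
/- Let d ≥ 2 and let P be a d-dimensional alcoved polytope in ℝ^d with at least one interior lattice point. Then every facet of P has lattice distance at most d − 1 to the set of interior lattice points of P. -/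
open scoped BigOperators Pointwise

/-!
Write the facet as `{y_i - y_j = k}` with `P` below it. Every boundary point of a polytope lies
on a facet (tilt a supporting hyperplane until its contact set spans a hyperplane), so, all
facets being alcove hyperplanes, the interior lattice points of `P` are exactly the integer
solutions of the difference constraints `y_u - y_v ≤ m_uv`, where `m_uv` is the largest integer
below `max_P (y_u - y_v)`. Take a solution `z` maximising `z_i - z_j`. Maximality forces a path
`i = v_0 → ⋯ → v_t = j` of tight constraints without repeated vertices, so `t ≤ d`, and summing
along it gives `k ≤ ∑ (m_{v_s v_{s+1}} + 1) = z_i - z_j + t`. Hence the lattice distance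
`k - (z_i - z_j)` is at most `d`, and equality would put the facet inside the two independent
hyperplanes `y_{v_0} - y_{v_1} = const` and `y_{v_1} - y_{v_2} = const`.
-/

open Module Set

section Functionals

variable {E : Type*} [NormedAddCommGroup E] [NormedSpace ℝ E] [FiniteDimensional ℝ E]

lemma Module.Dual.interior_preimage {f : Dual ℝ E} (hf : f ≠ 0) (s : Set ℝ) :
    interior (f ⁻¹' s) = f ⁻¹' interior s :=
  (IsOpenMap.preimage_interior_eq_interior_preimage
    (f.isOpenMap_of_finiteDimensional (LinearMap.surjective hf))
    f.continuous_of_finiteDimensional s).symm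

lemma Module.Dual.interior_subset_lt_csSup {f : Dual ℝ E} (hf : f ≠ 0) {P : Set E}
    (hP : BddAbove (f '' P)) : interior P ⊆ f ⁻¹' Iio (sSup (f '' P)) := by
  have hsub : P ⊆ f ⁻¹' Iic (sSup (f '' P)) := fun x hx => le_csSup hP (mem_image_of_mem f hx)
  rw [← interior_Iic, ← f.interior_preimage hf]
  exact interior_mono hsub

end Functionals

lemma direction_affineSpan_le_ker {k V W : Type*} [Ring k] [AddCommGroup V] [Module k V]
    [AddCommGroup W] [Module k W] (Φ : V →ₗ[k] W) {F : Set V} {c : W} (hF : ∀ x ∈ F, Φ x = c) :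
    (affineSpan k F).direction ≤ LinearMap.ker Φ := by
  rw [direction_affineSpan, vectorSpan_def, Submodule.span_le]
  rintro _ ⟨x, hx, y, hy, rfl⟩
  simp [hF x hx, hF y hy]

lemma coe_affineSpan_eq_setOf {k V W : Type*} [Ring k] [AddCommGroup V] [Module k V]
    [AddCommGroup W] [Module k W] {Φ : V →ₗ[k] W} {F : Set V} {c : W} (hF : ∀ x ∈ F, Φ x = c)
    (hne : F.Nonempty) (hD : (affineSpan k F).direction = LinearMap.ker Φ) :
    (affineSpan k F : Set V) = {x | Φ x = c} := by
  obtain ⟨w, hw⟩ := hne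
  ext x
  rw [SetLike.mem_coe, ← AffineSubspace.mk'_eq (mem_affineSpan k hw), AffineSubspace.mem_mk', hD,
    LinearMap.mem_ker, vsub_eq_sub, map_sub, hF w hw, sub_eq_zero]
  rfl

section TightSpan

variable {E : Type*} [AddCommGroup E] [Module ℝ E] (V : Finset E) (w : E)

def tightSpan (f : Dual ℝ E) : Submodule ℝ E :=
  Submodule.span ℝ ((· - w) '' {v | v ∈ V ∧ f v = f w})

variable {V w}

lemma sub_mem_tightSpan {f : Dual ℝ E} {v : E} (hv : v ∈ V) (hfv : f v = f w) :
    v - w ∈ tightSpan V w f :=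
  Submodule.subset_span ⟨v, ⟨hv, hfv⟩, rfl⟩

/-- The new functional is `f + ε • h`, where `ε` is the least tilt at which some vertex `v` with
`h w < h v` becomes tight. -/
lemma exists_tightSpan_lt_of_forall_eq_zero {f h : Dual ℝ E} (hsupp : ∀ v ∈ V, f v ≤ f w)
    (hh : ∀ b ∈ tightSpan V w f, h b = 0) (hhf : h ∉ ℝ ∙ f) (hu : ∃ u ∈ V, h w < h u) :
    ∃ g : Dual ℝ E, g ≠ 0 ∧ (∀ v ∈ V, g v ≤ g w) ∧ tightSpan V w f < tightSpan V w g := by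
  classical
  have hfix : ∀ v ∈ V, f v = f w → h v = h w := fun v hv hfv => by
    simpa [sub_eq_zero] using hh _ (sub_mem_tightSpan hv hfv)
  set Vp := V.filter fun v => h w < h v
  have hVp : Vp.Nonempty := by
    obtain ⟨u, hu, hwu⟩ := hu
    exact ⟨u, Finset.mem_filter.2 ⟨hu, hwu⟩⟩
  have hfVp : ∀ v ∈ Vp, f v < f w := fun v hv => by
    obtain ⟨hvV, hwv⟩ := Finset.mem_filter.1 hv
    exact (hsupp v hvV).lt_of_ne fun hfv => hwv.ne' (hfix v hvV hfv)
  set ratio : E → ℝ := fun v => (f w - f v) / (h v - h w)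
  obtain ⟨u, huVp, hmin⟩ := Vp.exists_min_image ratio hVp
  obtain ⟨huV, hwu⟩ := Finset.mem_filter.1 huVp
  set ε := ratio u
  have hε : 0 < ε := div_pos (sub_pos.2 (hfVp u huVp)) (sub_pos.2 hwu)
  refine ⟨f + ε • h, fun hg => hhf ?_, fun v hv => ?_, ?_⟩
  · rw [add_eq_zero_iff_eq_neg] at hg
    exact Submodule.mem_span_singleton.2 ⟨-ε⁻¹, by rw [hg, smul_neg, neg_smul, neg_neg, smul_smul,
      inv_mul_cancel₀ hε.ne', one_smul]⟩
  · simp only [LinearMap.add_apply, LinearMap.smul_apply, smul_eq_mul]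
    rcases le_or_gt (h v) (h w) with hle | hlt
    · nlinarith [hsupp v hv]
    · have := (le_div_iff₀ (sub_pos.2 hlt)).1 (hmin v (Finset.mem_filter.2 ⟨hv, hlt⟩))
      linarith
  · have hmono : tightSpan V w f ≤ tightSpan V w (f + ε • h) := by
      refine Submodule.span_mono (image_mono fun v ⟨hv, hfv⟩ => ⟨hv, ?_⟩)
      simp [hfv, hfix v hv hfv]
    have hεu : f u + ε * h u = f w + ε * h w := by
      have : h u - h w ≠ 0 := (sub_pos.2 hwu).ne'
      simp only [ε, ratio]
      field_simp
      ring
    refine SetLike.lt_iff_le_and_exists.2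
      ⟨hmono, u - w, sub_mem_tightSpan huV (by simpa using hεu), fun hmem => ?_⟩
    have := hh _ hmem
    rw [map_sub, sub_eq_zero] at this
    exact hwu.ne' this

end TightSpan

section Support

variable {E : Type*} [NormedAddCommGroup E] [NormedSpace ℝ E] [FiniteDimensional ℝ E]
  {V : Finset E} {w : E}

lemma exists_tightSpan_lt (hint : (interior (convexHull ℝ (V : Set E))).Nonempty)
    {f : Dual ℝ E} (hsupp : ∀ v ∈ V, f v ≤ f w)
    (hrank : finrank ℝ (tightSpan V w f) + 1 < finrank ℝ E) :
    ∃ g : Dual ℝ E, g ≠ 0 ∧ (∀ v ∈ V, g v ≤ g w) ∧ tightSpan V w f < tightSpan V w g := by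
  obtain ⟨h, hA, hhf⟩ : ∃ h ∈ (tightSpan V w f).dualAnnihilator, h ∉ ℝ ∙ f := by
    by_contra! hle
    have h1 := Submodule.finrank_mono (show _ ≤ ℝ ∙ f from hle)
    have h2 : finrank ℝ (ℝ ∙ f) ≤ 1 := (finrank_span_le_card ({f} : Set (Dual ℝ E))).trans (by simp)
    have h3 := Subspace.finrank_add_finrank_dualAnnihilator_eq (tightSpan V w f)
    have h4 : finrank ℝ (Dual ℝ E) = finrank ℝ E := Subspace.dual_finrank_eq
    omega
  have hh : ∀ b ∈ tightSpan V w f, h b = 0 := (Submodule.mem_dualAnnihilator h).1 hA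
  have hh0 : h ≠ 0 := fun h0 => hhf (h0 ▸ Submodule.zero_mem _)
  obtain ⟨u, huV, hu⟩ : ∃ u ∈ V, h u ≠ h w := by
    by_contra! hconst
    have hsub : convexHull ℝ (V : Set E) ⊆ h ⁻¹' {h w} :=
      convexHull_min hconst (convex_singleton (h w) |>.linear_preimage h)
    have := interior_mono hsub
    rw [h.interior_preimage hh0, interior_singleton, preimage_empty] at this
    exact hint.ne_empty (subset_empty_iff.1 this)
  rcases hu.lt_or_gt with hlt | hgt
  · refine exists_tightSpan_lt_of_forall_eq_zero hsupp (h := -h) (fun b hb => by simp [hh b hb])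
      (by rwa [Submodule.neg_mem_iff]) ⟨u, huV, by simpa using hlt⟩
  · exact exists_tightSpan_lt_of_forall_eq_zero hsupp hh hhf ⟨u, huV, hgt⟩

lemma exists_support_finrank_tightSpan (hint : (interior (convexHull ℝ (V : Set E))).Nonempty)
    (hw : w ∈ frontier (convexHull ℝ (V : Set E))) :
    ∃ f : Dual ℝ E, f ≠ 0 ∧ (∀ v ∈ V, f v ≤ f w) ∧
      finrank ℝ E ≤ finrank ℝ (tightSpan V w f) + 1 := by
  set P := convexHull ℝ (V : Set E)
  obtain ⟨f₀, hf₀⟩ := geometric_hahn_banach_open_point (convex_convexHull ℝ _).interior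
    isOpen_interior hw.2
  obtain ⟨x₀, hx₀⟩ := hint
  have hf₀0 : (f₀ : Dual ℝ E) ≠ 0 := by
    intro h0
    have := hf₀ x₀ hx₀
    rw [← f₀.coe_coe, h0] at this
    simp at this
  have hsupp₀ : ∀ v ∈ V, f₀ v ≤ f₀ w := by
    intro v hv
    have hcl : closure P ⊆ {x | f₀ x ≤ f₀ w} := by
      rw [← (convex_convexHull ℝ _).closure_interior_eq_closure_of_nonempty_interior ⟨x₀, hx₀⟩]
      exact closure_minimal (fun x hx => (hf₀ x hx).le) (isClosed_le f₀.continuous continuous_const)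
    exact hcl (subset_closure (subset_convexHull ℝ _ hv))
  suffices ∀ n, ∀ f : Dual ℝ E, f ≠ 0 → (∀ v ∈ V, f v ≤ f w) →
      finrank ℝ E ≤ n + finrank ℝ (tightSpan V w f) + 1 →
      ∃ f : Dual ℝ E, f ≠ 0 ∧ (∀ v ∈ V, f v ≤ f w) ∧ finrank ℝ E ≤ finrank ℝ (tightSpan V w f) + 1
    from this (finrank ℝ E) f₀ hf₀0 hsupp₀ (by omega)
  intro n
  induction n with
  | zero => exact fun f hf hsupp hrank => ⟨f, hf, hsupp, by simpa using hrank⟩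
  | succ n ih =>
    intro f hf hsupp hrank
    by_cases hdone : finrank ℝ E ≤ finrank ℝ (tightSpan V w f) + 1
    · exact ⟨f, hf, hsupp, hdone⟩
    obtain ⟨g, hg, hgsupp, hlt⟩ := exists_tightSpan_lt ⟨x₀, hx₀⟩ hsupp (by omega)
    exact ih g hg hgsupp (by have := Submodule.finrank_lt_finrank_of_lt hlt; omega)

end Support

section Walks

variable {α : Type*} {r : α → α → Prop}

lemma Relation.ReflTransGen.exists_walk {a b : α} (h : Relation.ReflTransGen r a b) :
    ∃ (t : ℕ) (v : ℕ → α), v 0 = a ∧ v t = b ∧ ∀ s < t, r (v s) (v (s + 1)) := by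
  induction h using Relation.ReflTransGen.head_induction_on with
  | refl => exact ⟨0, fun _ => b, rfl, rfl, by simp⟩
  | @head a c hac _ ih =>
    obtain ⟨t, v, hv0, hvt, hv⟩ := ih
    refine ⟨t + 1, fun s => s.casesOn a v, rfl, hvt, fun s hs => ?_⟩
    cases s with
    | zero => simpa [hv0] using hac
    | succ s => exact hv s (by omega)

lemma exists_walk_shortcut {t : ℕ} {v : ℕ → α} (hv : ∀ s < t, r (v s) (v (s + 1)))
    {s₁ s₂ : ℕ} (h₁₂ : s₁ < s₂) (h₂ : s₂ ≤ t) (heq : v s₁ = v s₂) :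
    ∃ w : ℕ → α, w 0 = v 0 ∧ w (t - (s₂ - s₁)) = v t ∧
      ∀ s < t - (s₂ - s₁), r (w s) (w (s + 1)) := by
  refine ⟨fun s => if s ≤ s₁ then v s else v (s + (s₂ - s₁)), by simp, ?_, fun s hs => ?_⟩
  · dsimp only
    split_ifs with h
    · rw [show t - (s₂ - s₁) = s₁ by omega, heq, show s₂ = t by omega]
    · rw [show t - (s₂ - s₁) + (s₂ - s₁) = t by omega]
  · rcases Nat.lt_trichotomy s s₁ with hlt | rfl | hgt
    · simpa [hlt.le, Nat.succ_le_of_lt hlt] using hv s (by omega)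
    · simpa [heq, show s + 1 + (s₂ - s) = s₂ + 1 by omega] using hv s₂ (by omega)
    · simpa [hgt.not_ge, show ¬ s + 1 ≤ s₁ by omega,
        show s + 1 + (s₂ - s₁) = s + (s₂ - s₁) + 1 by omega] using hv (s + (s₂ - s₁)) (by omega)

/-- A shortest walk visits no vertex twice. -/
lemma Relation.ReflTransGen.exists_injOn_walk {a b : α} (h : Relation.ReflTransGen r a b) :
    ∃ (t : ℕ) (v : ℕ → α), v 0 = a ∧ v t = b ∧ (∀ s < t, r (v s) (v (s + 1))) ∧
      Set.InjOn v (Set.Iic t) := by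
  classical
  have hex := h.exists_walk
  obtain ⟨v, hv0, hvt, hv⟩ := Nat.find_spec hex
  refine ⟨_, v, hv0, hvt, hv, ?_⟩
  have key : ∀ s₁ s₂, s₁ < s₂ → s₂ ≤ Nat.find hex → v s₁ ≠ v s₂ := by
    intro s₁ s₂ h₁₂ h₂ heq
    obtain ⟨w, hw0, hwt, hw⟩ := exists_walk_shortcut hv h₁₂ h₂ heq
    exact Nat.find_min hex (show Nat.find hex - (s₂ - s₁) < Nat.find hex by omega)
      ⟨w, hw0.trans hv0, hwt.trans hvt, hw⟩
  intro s₁ hs₁ s₂ hs₂ heq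
  rcases Nat.lt_trichotomy s₁ s₂ with hlt | heq' | hgt
  · exact absurd heq (key s₁ s₂ hlt hs₂)
  · exact heq'
  · exact absurd heq.symm (key s₂ s₁ hgt hs₁)

end Walks

section DifferenceConstraints

variable {ι : Type*} (m : ι → ι → ℤ)

def IsFeasible (x : ι → ℤ) : Prop := ∀ u v, u ≠ v → x u - x v ≤ m u v

def IsTight (x : ι → ℤ) (u v : ι) : Prop := u ≠ v ∧ x u - x v = m u v

variable {m}

/-- If `x` maximises `x i - x j` among feasible potentials, then `i` reaches `j` along tight
constraints: otherwise raising `x` by one on everything tightly reachable from `i` stays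
feasible and increases `x i - x j`. -/
lemma reflTransGen_isTight_of_forall_le {x : ι → ℤ} (hx : IsFeasible m x) {i j : ι}
    (hmax : ∀ y, IsFeasible m y → y i - y j ≤ x i - x j) :
    Relation.ReflTransGen (IsTight m x) i j := by
  classical
  by_contra hj
  set y : ι → ℤ := fun u => x u + if Relation.ReflTransGen (IsTight m x) i u then 1 else 0
  have hy : IsFeasible m y := by
    intro u v huv
    have hle := hx u v huv
    by_cases hu : Relation.ReflTransGen (IsTight m x) i u <;>
      by_cases hv : Relation.ReflTransGen (IsTight m x) i v <;>
      simp only [y, hu, hv, if_true, if_false]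
    · omega
    · have hne : x u - x v ≠ m u v := fun he => hv (hu.tail ⟨huv, he⟩)
      omega
    · omega
    · omega
  have := hmax y hy
  simp only [y, Relation.ReflTransGen.refl, hj, if_true, if_false] at this
  omega

end DifferenceConstraints

section Alcoved

variable {d : ℕ}

lemma isFacet_of_support {P : Set (Fin d → ℝ)} {f : Dual ℝ (Fin d → ℝ)} (hf : f ≠ 0) {c : ℝ}
    (hle : ∀ x ∈ P, f x ≤ c)
    (hdim : d - 1 ≤ finrank ℝ (affineSpan ℝ {x ∈ P | f x = c}).direction) :
    IsFacet P {x ∈ P | f x = c} := by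
  set a := (dotProductEquiv ℝ (Fin d)).symm f
  have ha : dotProductEquiv ℝ (Fin d) a = f := LinearEquiv.apply_symm_apply _ f
  have hD := Submodule.finrank_mono
    (direction_affineSpan_le_ker f (F := {x ∈ P | f x = c}) fun x hx => hx.2)
  have hker := Dual.finrank_ker_add_one_of_ne_zero hf
  rw [finrank_fin_fun] at hker
  refine ⟨a, c, fun h0 => hf (by rw [← ha, h0, map_zero]), fun x hx => ?_, ?_, by omega⟩
  · rw [← ha] at hle
    exact hle x hx
  · rw [← ha]
    rfl

theorem IsPolytope.exists_isFacet_mem {P : Set (Fin d → ℝ)} (hP : IsPolytope P)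
    (hfull : IsFullDim P) {w : Fin d → ℝ} (hw : w ∈ frontier P) : ∃ F, IsFacet P F ∧ w ∈ F := by
  obtain ⟨V, rfl⟩ := hP
  obtain ⟨f, hf, hsupp, hrank⟩ := exists_support_finrank_tightSpan hfull hw
  have hwP : w ∈ convexHull ℝ (V : Set (Fin d → ℝ)) :=
    (V.finite_toSet.isCompact_convexHull ℝ).isClosed.frontier_subset hw
  have hwF : w ∈ {x ∈ convexHull ℝ (V : Set (Fin d → ℝ)) | f x = f w} := ⟨hwP, rfl⟩
  refine ⟨_, isFacet_of_support hf (fun x hx => convexHull_min hsupp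
    (convex_halfSpace_le f.isLinear (f w)) hx) ?_, hwF⟩
  have hle : tightSpan V w f ≤ (affineSpan ℝ {x ∈ convexHull ℝ ↑V | f x = f w}).direction := by
    refine Submodule.span_le.2 ?_
    rintro _ ⟨v, ⟨hv, hfv⟩, rfl⟩
    exact AffineSubspace.vsub_mem_direction
      (mem_affineSpan ℝ ⟨subset_convexHull ℝ _ hv, hfv⟩) (mem_affineSpan ℝ hwF)
  have := Submodule.finrank_mono hle
  rw [finrank_fin_fun] at hrank
  omega

lemma IsFacet.subset {P F : Set (Fin d → ℝ)} (hF : IsFacet P F) : F ⊆ P := by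
  obtain ⟨-, -, -, -, rfl, -⟩ := hF
  exact fun x hx => hx.1

lemma IsFacet.nonempty {P F : Set (Fin d → ℝ)} (hd : 2 ≤ d) (hF : IsFacet P F) : F.Nonempty := by
  obtain ⟨-, -, -, -, -, hdim⟩ := hF
  rw [Set.nonempty_iff_ne_empty]
  rintro rfl
  rw [AffineSubspace.span_empty, AffineSubspace.direction_bot, finrank_bot] at hdim
  omega

def consZero {R : Type*} [Zero R] (x : Fin d → R) : Fin (d + 1) → R := Fin.cons 0 x

lemma consZero_normalize {R : Type*} [AddGroup R] (X : Fin (d + 1) → R) (u : Fin (d + 1)) :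
    consZero (fun t => X t.succ - X 0) u = X u - X 0 := by
  cases u using Fin.cases <;> simp [consZero]

def diffVec (u v : Fin (d + 1)) : Fin d → ℤ :=
  Fin.tail (Pi.single u 1 - Pi.single v 1 : Fin (d + 1) → ℤ)

lemma sum_diffVec_mul {R : Type*} [CommRing R] (u v : Fin (d + 1)) (x : Fin d → R) :
    ∑ t, (diffVec u v t : R) * x t = consZero x u - consZero x v := by
  have key : ∀ u : Fin (d + 1),
      ∑ t : Fin d, ((Pi.single u (1 : ℤ) : Fin (d + 1) → ℤ) t.succ : R) * x t = consZero x u := by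
    intro u
    cases u using Fin.cases <;> simp [consZero, Pi.single_apply, Fin.succ_inj]
  simp only [diffVec, Fin.tail, Pi.sub_apply, Int.cast_sub, sub_mul, Finset.sum_sub_distrib, key]

/-- `y ↦ y_u - y_v` (with `y_0 = 0`), given by its integer coefficient vector `diffVec u v`. -/
noncomputable def coordDiff (u v : Fin (d + 1)) : Dual ℝ (Fin d → ℝ) :=
  dotProductEquiv ℝ (Fin d) fun t => (diffVec u v t : ℝ)

lemma coordDiff_apply (u v : Fin (d + 1)) (y : Fin d → ℝ) :
    coordDiff u v y = extCoord y u - extCoord y v :=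
  sum_diffVec_mul u v y

lemma coordDiff_intCast (u v : Fin (d + 1)) (p : Fin d → ℤ) :
    coordDiff u v (fun t => (p t : ℝ)) = ((consZero p u - consZero p v : ℤ) : ℝ) := by
  rw [coordDiff_apply]
  cases u using Fin.cases <;> cases v using Fin.cases <;> simp [extCoord, consZero]

lemma coordDiff_swap (u v : Fin (d + 1)) : coordDiff v u = -coordDiff u v := by
  ext y
  simp [coordDiff_apply]

lemma coordDiff_normalize (u v : Fin (d + 1)) (X : Fin (d + 1) → ℝ) :
    coordDiff u v (fun t => X t.succ - X 0) = X u - X v := by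
  rw [coordDiff_apply, extCoord, ← consZero, consZero_normalize, consZero_normalize]
  ring

lemma coordDiff_ne_zero {u v : Fin (d + 1)} (huv : u ≠ v) : coordDiff u v ≠ 0 := by
  intro h0
  have := coordDiff_normalize u v (Pi.single u 1)
  simp [h0, huv.symm] at this

lemma diffVec_surjective {u v : Fin (d + 1)} (huv : u ≠ v) :
    Function.Surjective fun q : Fin d → ℤ => ∑ t, diffVec u v t * q t := by
  intro c
  set X : Fin (d + 1) → ℤ := Pi.single u c
  refine ⟨fun t => X t.succ - X 0, ?_⟩
  simpa [X, consZero_normalize, huv.symm] using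
    sum_diffVec_mul (R := ℤ) u v (fun t => X t.succ - X 0)

lemma diffVec_ne_zero {u v : Fin (d + 1)} (huv : u ≠ v) : diffVec u v ≠ 0 := by
  intro h0
  obtain ⟨q, hq⟩ := diffVec_surjective huv 1
  simp [h0] at hq

lemma direction_eq_ker_of_isFacet {P F : Set (Fin d → ℝ)} (hF : IsFacet P F)
    {g : Dual ℝ (Fin d → ℝ)} (hg : g ≠ 0) {c : ℝ} (hFg : ∀ x ∈ F, g x = c) :
    (affineSpan ℝ F).direction = LinearMap.ker g := by
  obtain ⟨-, -, -, -, -, hdim⟩ := hF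
  refine Submodule.eq_of_le_of_finrank_eq (direction_affineSpan_le_ker g hFg) ?_
  have := Dual.finrank_ker_add_one_of_ne_zero hg
  rw [finrank_fin_fun] at this
  omega

lemma IsFacet.exists_coordDiff {P F : Set (Fin d → ℝ)} (hd : 2 ≤ d) (hF : IsFacet P F)
    (hH : ∃ H, IsAlcoveHyperplane H ∧ F ⊆ H) :
    ∃ (u v : Fin (d + 1)) (k : ℤ), u ≠ v ∧ (∀ x ∈ P, coordDiff u v x ≤ k) ∧
      (affineSpan ℝ F : Set (Fin d → ℝ)) = {x | coordDiff u v x = k} := by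
  obtain ⟨w, hw⟩ := hF.nonempty hd
  obtain ⟨H, ⟨i, j, k, hij, rfl⟩, hFH⟩ := hH
  have hFk : ∀ x ∈ F, coordDiff i j x = k := fun x hx => by rw [coordDiff_apply]; exact hFH hx
  obtain ⟨a, c, ha, hle, rfl, -⟩ := id hF
  set f := dotProductEquiv ℝ (Fin d) a
  have hf : f ≠ 0 := (LinearEquiv.map_ne_zero_iff _).2 ha
  have hFc : ∀ x ∈ {x ∈ P | ∑ i, a i * x i = c}, f x = c := fun x hx => hx.2
  have hspan : (affineSpan ℝ {x ∈ P | ∑ i, a i * x i = c} : Set (Fin d → ℝ)) =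
      {x | coordDiff i j x = k} :=
    coe_affineSpan_eq_setOf hFk ⟨w, hw⟩ (direction_eq_ker_of_isFacet hF (coordDiff_ne_zero hij) hFk)
  have hker : ⨅ _ : Unit, LinearMap.ker f ≤ LinearMap.ker (coordDiff i j) := by
    rw [ciInf_const, ← direction_eq_ker_of_isFacet hF hf hFc,
      direction_eq_ker_of_isFacet hF (coordDiff_ne_zero hij) hFk]
  obtain ⟨r, hr⟩ := Submodule.mem_span_singleton.1
    (by simpa using mem_span_of_iInf_ker_le_ker hker)
  have happ : ∀ x, coordDiff i j x = r * f x := fun x => by rw [← hr]; rfl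
  have hrc : (k : ℝ) = r * c := by rw [← hFk w hw, happ, hFc w hw]
  have hr0 : r ≠ 0 := fun h0 => coordDiff_ne_zero hij (by rw [← hr, h0, zero_smul])
  rcases hr0.lt_or_gt with hneg | hpos
  · refine ⟨j, i, -k, hij.symm, fun x hx => ?_, ?_⟩
    · rw [coordDiff_swap, LinearMap.neg_apply, happ, Int.cast_neg, hrc]
      nlinarith [show f x ≤ c from hle x hx]
    · rw [hspan, coordDiff_swap]
      ext x
      simp [neg_eq_iff_eq_neg]
  · refine ⟨i, j, k, hij, fun x hx => ?_, hspan⟩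
    rw [happ, hrc]
    nlinarith [show f x ≤ c from hle x hx]

lemma IsPolytope.isCompact {P : Set (Fin d → ℝ)} (hP : IsPolytope P) : IsCompact P := by
  obtain ⟨V, rfl⟩ := hP
  exact V.finite_toSet.isCompact_convexHull ℝ

lemma IsPolytope.coordDiff_lt_csSup {P : Set (Fin d → ℝ)} (hP : IsPolytope P) {y : Fin d → ℝ}
    (hy : y ∈ interior P) {u v : Fin (d + 1)} (huv : u ≠ v) :
    coordDiff u v y < sSup (coordDiff u v '' P) :=
  Dual.interior_subset_lt_csSup (coordDiff_ne_zero huv)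
    (hP.isCompact.bddAbove_image (coordDiff u v).continuous_of_finiteDimensional.continuousOn) hy

theorem IsAlcovedPolytope.interior_eq {P : Set (Fin d → ℝ)} (hd : 2 ≤ d)
    (hP : IsAlcovedPolytope P) :
    interior P = {y | ∀ u v, u ≠ v → coordDiff u v y < sSup (coordDiff u v '' P)} := by
  obtain ⟨hpoly, ⟨x₀, hx₀⟩, halc⟩ := hP
  refine Subset.antisymm (fun y hy u v huv => hpoly.coordDiff_lt_csSup hy huv) ?_
  have hS : Convex ℝ {y | ∀ u v, u ≠ v → coordDiff u v y < sSup (coordDiff u v '' P)} :=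
    fun x hx y hy a b ha hb hab u v huv =>
      convex_halfSpace_lt (coordDiff u v).isLinear _ (hx u v huv) (hy u v huv) ha hb hab
  refine hS.isPreconnected.subset_of_closure_inter_subset isOpen_interior
    ⟨x₀, fun u v huv => hpoly.coordDiff_lt_csSup hx₀ huv, hx₀⟩ ?_
  rintro y ⟨hycl, hyS⟩
  have hyP : y ∈ P := closure_minimal interior_subset hpoly.isCompact.isClosed hycl
  by_contra hyi
  obtain ⟨F, hF, hyF⟩ := hpoly.exists_isFacet_mem ⟨x₀, hx₀⟩ ⟨subset_closure hyP, hyi⟩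
  obtain ⟨u, v, k, huv, hle, hspan⟩ := hF.exists_coordDiff hd (halc F hF)
  have hyk : coordDiff u v y = k := by
    have hy : y ∈ (affineSpan ℝ F : Set (Fin d → ℝ)) := mem_affineSpan ℝ hyF
    rwa [hspan] at hy
  have hsup : sSup (coordDiff u v '' P) ≤ k :=
    csSup_le ⟨_, mem_image_of_mem _ hyP⟩ (forall_mem_image.2 hle)
  linarith [hyS u v huv]

lemma finrank_direction_add_two_le {F : Set (Fin d → ℝ)} {a b c : Fin (d + 1)} (hab : a ≠ b)
    (hbc : b ≠ c) (hac : a ≠ c) {c₁ c₂ : ℝ} (h₁ : ∀ x ∈ F, coordDiff a b x = c₁)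
    (h₂ : ∀ x ∈ F, coordDiff b c x = c₂) :
    finrank ℝ (affineSpan ℝ F).direction + 2 ≤ d := by
  set Φ := (coordDiff a b).prod (coordDiff b c)
  have hΦ : Function.Surjective Φ := by
    rintro ⟨y₁, y₂⟩
    let X : Fin (d + 1) → ℝ := Pi.single a (y₁ + y₂) + Pi.single b y₂
    refine ⟨_, Prod.ext ((coordDiff_normalize a b X).trans ?_)
      ((coordDiff_normalize b c X).trans ?_)⟩ <;> simp [X, hab.symm, hbc.symm, hac.symm]
  have hker := Submodule.finrank_mono (direction_affineSpan_le_ker Φ (c := (c₁, c₂))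
    fun x hx => Prod.ext (h₁ x hx) (h₂ x hx))
  have hrank := LinearMap.finrank_range_add_finrank_ker Φ
  rw [LinearMap.range_eq_top.2 hΦ, finrank_top, finrank_fin_fun, Module.finrank_prod,
    Module.finrank_self] at hrank
  omega

noncomputable def alcoveBound (P : Set (Fin d → ℝ)) (u v : Fin (d + 1)) : ℤ :=
  ⌈sSup (coordDiff u v '' P)⌉ - 1

lemma IsAlcovedPolytope.mem_interiorLatticePts_iff {P : Set (Fin d → ℝ)} (hd : 2 ≤ d)
    (hP : IsAlcovedPolytope P) {p : Fin d → ℤ} :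
    p ∈ interiorLatticePts P ↔ IsFeasible (alcoveBound P) (consZero p) := by
  simp only [interiorLatticePts, mem_ofPred_eq, hP.interior_eq hd, coordDiff_intCast,
    IsFeasible, alcoveBound, Int.le_sub_one_iff, Int.lt_ceil]

lemma isFeasible_consZero_normalize {m : Fin (d + 1) → Fin (d + 1) → ℤ} {X : Fin (d + 1) → ℤ} :
    IsFeasible m (consZero fun t => X t.succ - X 0) ↔ IsFeasible m X := by
  simp only [IsFeasible, consZero_normalize, sub_sub_sub_cancel_right]

lemma coordDiff_le_alcoveBound_add_one {P : Set (Fin d → ℝ)} (hP : IsPolytope P) {x : Fin d → ℝ}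
    (hx : x ∈ P) (u v : Fin (d + 1)) : coordDiff u v x ≤ alcoveBound P u v + 1 := by
  rw [alcoveBound, Int.cast_sub, Int.cast_one, sub_add_cancel]
  exact (le_csSup (hP.isCompact.bddAbove_image
    (coordDiff u v).continuous_of_finiteDimensional.continuousOn) (mem_image_of_mem _ hx)).trans
    (Int.le_ceil _)

lemma sum_slack_walk {m : Fin (d + 1) → Fin (d + 1) → ℤ} {z : Fin d → ℤ} {t : ℕ}
    {v : ℕ → Fin (d + 1)} (htight : ∀ s < t, IsTight m (consZero z) (v s) (v (s + 1)))
    (x : Fin d → ℝ) :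
    ∑ s ∈ Finset.range t, ((m (v s) (v (s + 1)) : ℝ) + 1 - coordDiff (v s) (v (s + 1)) x)
      = ((consZero z (v 0) - consZero z (v t) : ℤ) : ℝ) + t - coordDiff (v 0) (v t) x := by
  have hz : ∑ s ∈ Finset.range t, m (v s) (v (s + 1)) = consZero z (v 0) - consZero z (v t) := by
    rw [← Finset.sum_range_sub' (fun s => consZero z (v s))]
    exact Finset.sum_congr rfl fun s hs => ((htight s (Finset.mem_range.1 hs)).2).symm
  have hx : ∑ s ∈ Finset.range t, coordDiff (v s) (v (s + 1)) x = coordDiff (v 0) (v t) x := by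
    simp only [coordDiff_apply]
    exact Finset.sum_range_sub' (fun s => extCoord x (v s)) t
  simp only [Finset.sum_sub_distrib, Finset.sum_add_distrib, hx, ← hz]
  push_cast
  simp

/-- Each step of the walk has nonnegative slack on `P`, and on the facet the slacks add up to
`z_{v_0} - z_{v_t} + t - k` with `t ≤ d`; if this is `0`, the first two steps are tight on the
whole facet, which is too many independent equations for a facet. -/
lemma le_consZero_sub_of_isTight_walk {P F : Set (Fin d → ℝ)} (hd : 2 ≤ d) (hP : IsPolytope P)
    (hF : IsFacet P F) {z : Fin d → ℤ} {t : ℕ} {v : ℕ → Fin (d + 1)}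
    (htight : ∀ s < t, IsTight (alcoveBound P) (consZero z) (v s) (v (s + 1)))
    (hinj : InjOn v (Iic t)) {k : ℤ} (hFk : ∀ x ∈ F, coordDiff (v 0) (v t) x = k) :
    k - ((d : ℤ) - 1) ≤ consZero z (v 0) - consZero z (v t) := by
  set m := alcoveBound P
  have htd : t ≤ d := by
    have := Finset.card_le_card_of_injOn v (t := Finset.univ) (fun _ _ => Finset.mem_univ _)
      (by rwa [Finset.coe_Iic])
    simpa using this
  have hslack : ∀ x ∈ P, ∀ s, 0 ≤ (m (v s) (v (s + 1)) : ℝ) + 1 - coordDiff (v s) (v (s + 1)) x :=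
    fun x hx s => by simpa using coordDiff_le_alcoveBound_add_one hP hx (v s) (v (s + 1))
  obtain ⟨w, hw⟩ := hF.nonempty hd
  have hsum_w := sum_slack_walk htight w
  rw [hFk w hw] at hsum_w
  have hk : k ≤ consZero z (v 0) - consZero z (v t) + t := by
    have := hsum_w ▸ Finset.sum_nonneg fun s _ => hslack w (hF.subset hw) s
    exact_mod_cast (sub_nonneg.1 this)
  by_contra! hlt
  have htight_F : ∀ s < t, ∀ x ∈ F, coordDiff (v s) (v (s + 1)) x = m (v s) (v (s + 1)) + 1 := by
    intro s hs x hx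
    have hsum := sum_slack_walk htight x
    rw [hFk x hx, show consZero z (v 0) - consZero z (v t) = k - t by omega] at hsum
    push_cast at hsum
    have := (Finset.sum_eq_zero_iff_of_nonneg fun s _ => hslack x (hF.subset hx) s).1
      (by rw [hsum]; ring) s (Finset.mem_range.2 hs)
    linarith
  have hne : ∀ s₁ s₂, s₁ ≤ 2 → s₂ ≤ 2 → s₁ ≠ s₂ → v s₁ ≠ v s₂ := fun s₁ s₂ h₁ h₂ h12 heq =>
    h12 (hinj (show s₁ ≤ t by omega) (show s₂ ≤ t by omega) heq)
  have := finrank_direction_add_two_le (hne 0 1 (by omega) (by omega) (by omega))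
    (hne 1 2 (by omega) (by omega) (by omega)) (hne 0 2 (by omega) (by omega) (by omega))
    (htight_F 0 (by omega)) (htight_F 1 (by omega))
  obtain ⟨-, -, -, -, -, hdim⟩ := hF
  omega

theorem exists_interiorLatticePt_near_facet {P F : Set (Fin d → ℝ)} (hd : 2 ≤ d)
    (hP : IsAlcovedPolytope P) (hint : (interiorLatticePts P).Nonempty) (hF : IsFacet P F)
    {i j : Fin (d + 1)} {k : ℤ} (hij : i ≠ j) (hFk : ∀ x ∈ F, coordDiff i j x = k) :
    ∃ p ∈ interiorLatticePts P, k - ((d : ℤ) - 1) ≤ consZero p i - consZero p j := by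
  have hmem : ∀ p, p ∈ interiorLatticePts P ↔ IsFeasible (alcoveBound P) (consZero p) :=
    fun p => hP.mem_interiorLatticePts_iff hd
  obtain ⟨μ, ⟨z, hz, rfl⟩, hzmax⟩ := Int.exists_greatest_of_bdd
    (P := fun μ => ∃ p ∈ interiorLatticePts P, consZero p i - consZero p j = μ)
    ⟨alcoveBound P i j, by rintro _ ⟨p, hp, rfl⟩; exact (hmem p).1 hp i j hij⟩
    (hint.elim fun p hp => ⟨_, p, hp, rfl⟩)
  have hmax : ∀ X, IsFeasible (alcoveBound P) X → X i - X j ≤ consZero z i - consZero z j :=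
    fun X hX => by
      simpa [consZero_normalize] using
        hzmax _ ⟨_, (hmem _).2 (isFeasible_consZero_normalize.2 hX), rfl⟩
  obtain ⟨t, v, rfl, rfl, htight, hinj⟩ :=
    (reflTransGen_isTight_of_forall_le ((hmem z).1 hz) hmax).exists_injOn_walk
  exact ⟨z, hz, le_consZero_sub_of_isTight_walk hd hP.1 hF htight hinj hFk⟩

lemma latticeDistAux_eq_of_lt {a : Fin d → ℤ} {b : ℤ} {p : Fin d → ℤ}
    (ha : Function.Surjective fun q : Fin d → ℤ => ∑ i, a i * q i) (hp : ∑ i, a i * p i < b) :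
    latticeDistAux a b p = (b - ∑ i, a i * p i).toNat := by
  rw [latticeDistAux, if_neg hp.ne, min_eq_left hp.le, max_eq_right hp.le,
    Nat.card_congr (Equiv.subtypeEquivRight fun c => and_iff_right (ha c))]
  change Nat.card (Ioo _ b) + 1 = _
  rw [Nat.card_coe_set_eq, ← Finset.coe_Ioo, ncard_coe_finset, Int.card_Ioo]
  omega

end Alcoved

/-- Every facet of a `d`-dimensional alcoved polytope (`d ≥ 2`) with
interior lattice points has lattice distance at most `d - 1` to the set of interior
lattice points. -/
theorem stmt4 (d : ℕ) (hd : 2 ≤ d) (P : Set (Fin d → ℝ)) (hP : IsAlcovedPolytope P)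
    (hint : (interiorLatticePts P).Nonempty)
    (F : Set (Fin d → ℝ)) (hF : IsFacet P F) :
    facetLatticeDistSet F (interiorLatticePts P) ≤ d - 1 := by
  obtain ⟨i, j, k, hij, hle, hspan⟩ := hF.exists_coordDiff hd (hP.2.2 F hF)
  have hFk : ∀ x ∈ F, coordDiff i j x = k := fun x hx => by
    have hx' := mem_affineSpan ℝ hx
    rwa [← SetLike.mem_coe, hspan] at hx'
  obtain ⟨p, hp, hnear⟩ := exists_interiorLatticePt_near_facet hd hP hint hF hij hFk
  have hbelow : consZero p i - consZero p j < k := by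
    have h := hP.1.coordDiff_lt_csSup hp hij
    rw [coordDiff_intCast] at h
    exact_mod_cast h.trans_le (csSup_le ⟨_, mem_image_of_mem _ (interior_subset hp)⟩
      (forall_mem_image.2 hle))
  have hsum : ∑ t, diffVec i j t * p t = consZero p i - consZero p j := by
    simpa using sum_diffVec_mul i j p
  calc facetLatticeDistSet F (interiorLatticePts P)
      ≤ hyperplaneLatticeDist (affineSpan ℝ F : Set (Fin d → ℝ)) p := Nat.sInf_le ⟨p, hp, rfl⟩
    _ ≤ latticeDistAux (diffVec i j) k p :=
      Nat.sInf_le ⟨diffVec i j, k, diffVec_ne_zero hij, hspan, rfl⟩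
    _ ≤ d - 1 := by
      rw [latticeDistAux_eq_of_lt (diffVec_surjective hij) (hsum ▸ hbelow), hsum]
      omega
end

section
/- For every d ≥ 1, the polytope Q_d equals the convex hull of the union of the cubes [−1,0]^d and [0,1]^d. Moreover, Q_d contains exactly 2^{d+1} − 1 lattice points: the origin is its unique interior lattice point, and the remaining 2^{d+1} − 2 lattice points of Q_d are vertices of Q_d. -/
open scoped BigOperators Pointwise

/-!
A point `y` lies in `Q_d` exactly when its coordinates, together with `y₀ = 0`, fit into an
interval `[a, b]` with `a ≤ 0 ≤ b ≤ a + 1`. Splitting `y` into its positive and negative parts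
then writes it as `b • u + (-a) • v + (1 - b + a) • 0` with `u ∈ [0,1]^d` and `v ∈ [-1,0]^d`;
for a lattice point the same interval forces all coordinates into `{0, 1}` or all into `{-1, 0}`.
Since `Q_d` lies in the closed unit ball of the sup norm and contains the ball of radius `1/2`,
the origin is its only interior lattice point. A nonzero `0/1`-vector `p` with `p i = 1` is a
vertex of the cube `[0,1]^d`, and the face of `Q_d` on which `y i` is maximal lies inside that
cube, so `p` is a vertex of `Q_d`; the `{-1, 0}`-vectors follow from the symmetry `Q_d = -Q_d`.
-/

lemma smul_add_smul_mem_convexHull_union {E : Type*} [AddCommGroup E] [Module ℝ E]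
    {A B : Set E} (hA : (0 : E) ∈ A) {s t : ℝ} (hs : 0 ≤ s) (ht : 0 ≤ t) (hst : s + t ≤ 1)
    {a b : E} (ha : a ∈ A) (hb : b ∈ B) : s • a + t • b ∈ convexHull ℝ (A ∪ B) := by
  have hu : 0 ≤ 1 - s - t := by linarith
  have hmem := (convex_convexHull ℝ (A ∪ B)).sum_mem (t := Finset.univ)
    (w := ![s, t, 1 - s - t]) (z := ![a, b, 0])
    (by simp [Fin.forall_fin_succ, hs, ht, hu]) (by simp [Fin.sum_univ_three])
    (by simp [Fin.forall_fin_succ, subset_convexHull ℝ (A ∪ B) (Or.inl ha),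
      subset_convexHull ℝ (A ∪ B) (Or.inr hb), subset_convexHull ℝ (A ∪ B) (Or.inl hA)])
  simpa [Fin.sum_univ_three] using hmem

lemma card_Icc_neg_one_zero_union_Icc_zero_one (ι : Type*) [Fintype ι] [DecidableEq ι] :
    (Finset.Icc (-1 : ι → ℤ) 0 ∪ Finset.Icc 0 1).card = 2 ^ (Fintype.card ι + 1) - 1 := by
  have hinter : Finset.Icc (-1 : ι → ℤ) 0 ∩ Finset.Icc 0 1 = {0} := by
    ext p
    simp only [Finset.mem_inter, Finset.mem_Icc, Finset.mem_singleton]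
    exact ⟨fun h => le_antisymm h.1.2 h.2.1, by rintro rfl; simp⟩
  have hcard₁ : (Finset.Icc (-1 : ι → ℤ) 0).card = 2 ^ Fintype.card ι := by simp [Pi.card_Icc]
  have hcard₂ : (Finset.Icc (0 : ι → ℤ) 1).card = 2 ^ Fintype.card ι := by simp [Pi.card_Icc]
  have hunion := Finset.card_union_add_card_inter (Finset.Icc (-1 : ι → ℤ) 0) (Finset.Icc 0 1)
  rw [hinter, hcard₁, hcard₂, Finset.card_singleton] at hunion
  rw [pow_succ]
  omega

lemma eq_zero_of_norm_intCast_lt_one {ι : Type*} [Fintype ι] {p : ι → ℤ}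
    (hp : ‖fun i => (p i : ℝ)‖ < 1) : p = 0 := by
  ext k
  have hk : |(p k : ℝ)| < 1 := by simpa using (pi_norm_lt_iff one_pos).1 hp k
  exact Int.abs_lt_one_iff.1 (by exact_mod_cast hk)

lemma extremePoints_Icc_zero_one (ι : Type*) :
    Set.extremePoints ℝ (Set.Icc (0 : ι → ℝ) 1) = Set.univ.pi fun _ => {0, 1} := by
  rw [← Set.pi_univ_Icc, extremePoints_pi]
  simp

lemma intCast_mem_extremePoints_Icc_zero_one {ι : Type*} {p : ι → ℤ} (hp : p ∈ Set.Icc 0 1) :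
    (fun i => (p i : ℝ)) ∈ Set.extremePoints ℝ (Set.Icc (0 : ι → ℝ) 1) := by
  rw [extremePoints_Icc_zero_one]
  intro k _
  have h₀ : 0 ≤ p k := hp.1 k
  have h₁ : p k ≤ 1 := hp.2 k
  rcases show p k = 0 ∨ p k = 1 by omega with h | h <;> simp [h]

section Qd

variable {d : ℕ}

@[simp] lemma extCoord_zero (y : Fin d → ℝ) : extCoord y 0 = 0 := rfl

@[simp] lemma extCoord_succ (y : Fin d → ℝ) (k : Fin d) : extCoord y k.succ = y k := rfl

lemma isLinearMap_extCoord_sub (i j : Fin (d + 1)) :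
    IsLinearMap ℝ fun y : Fin d → ℝ => extCoord y i - extCoord y j := by
  constructor <;> intros <;> cases i using Fin.cases <;> cases j using Fin.cases <;>
    simp <;> ring

lemma convex_Qd : Convex ℝ (Qd d) := by
  have hQd : Qd d = ⋂ i, ⋂ j, {y | extCoord y i - extCoord y j ≤ 1} := by
    ext y; simp [Qd]
  rw [hQd]
  exact convex_iInter fun i => convex_iInter fun j =>
    convex_halfSpace_le (isLinearMap_extCoord_sub i j) 1

lemma mem_Qd_iff {y : Fin d → ℝ} :
    y ∈ Qd d ↔ ∃ a b : ℝ, a ≤ 0 ∧ 0 ≤ b ∧ b ≤ a + 1 ∧ ∀ k, y k ∈ Set.Icc a b := by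
  constructor
  · intro hy
    obtain ⟨i, hi⟩ := Finite.exists_max (extCoord y)
    obtain ⟨j, hj⟩ := Finite.exists_min (extCoord y)
    refine ⟨extCoord y j, extCoord y i, hj 0, hi 0, by linarith [hy i j], fun k => ?_⟩
    simpa using And.intro (hj k.succ) (hi k.succ)
  · rintro ⟨a, b, ha, hb, hab, hy⟩ i j
    have hext : ∀ k, extCoord y k ∈ Set.Icc a b := fun k => by
      cases k using Fin.cases
      · exact ⟨by simpa using ha, by simpa using hb⟩
      · simpa using hy _
    linarith [(hext i).2, (hext j).1]

lemma Icc_neg_one_zero_subset_Qd : Set.Icc (-1 : Fin d → ℝ) 0 ⊆ Qd d :=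
  fun _ hy => mem_Qd_iff.2 ⟨-1, 0, by norm_num, le_rfl, by norm_num, fun k => ⟨hy.1 k, hy.2 k⟩⟩

lemma Icc_zero_one_subset_Qd : Set.Icc (0 : Fin d → ℝ) 1 ⊆ Qd d :=
  fun _ hy => mem_Qd_iff.2 ⟨0, 1, le_rfl, zero_le_one, by norm_num, fun k => ⟨hy.1 k, hy.2 k⟩⟩

lemma Qd_subset_convexHull :
    Qd d ⊆ convexHull ℝ (Set.Icc (-1 : Fin d → ℝ) 0 ∪ Set.Icc (0 : Fin d → ℝ) 1) := by
  intro y hy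
  obtain ⟨a, b, ha, hb, hab, hy⟩ := mem_Qd_iff.1 hy
  -- If `b = 0` (resp. `a = 0`), the positive (resp. negative) part of `y` vanishes, so the
  -- convention `x / 0 = 0` keeps these identities true.
  have hpos : ∀ k, b * (max (y k) 0 / b) = max (y k) 0 := fun k =>
    mul_div_cancel_of_imp' fun hb0 => by simpa [hb0] using (hy k).2
  have hneg : ∀ k, -a * (min (y k) 0 / -a) = min (y k) 0 := fun k =>
    mul_div_cancel_of_imp' fun ha0 => by simpa [neg_eq_zero.1 ha0] using (hy k).1
  have hsplit : y = b • (fun k => max (y k) 0 / b) + (-a) • (fun k => min (y k) 0 / -a) := by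
    ext k
    simp only [Pi.add_apply, Pi.smul_apply, smul_eq_mul, hpos, hneg, max_add_min, add_zero]
  rw [Set.union_comm, hsplit]
  refine smul_add_smul_mem_convexHull_union (by simp) hb (by linarith) (by linarith) ?_ ?_
  · refine ⟨fun k => div_nonneg (le_max_right _ _) hb, fun k => div_le_one_of_le₀ ?_ hb⟩
    exact max_le (hy k).2 hb
  · refine ⟨fun k => ?_, fun k => div_nonpos_of_nonpos_of_nonneg (min_le_right _ _) (by linarith)⟩
    show (-1 : ℝ) ≤ min (y k) 0 / -a
    rcases ha.lt_or_eq with ha | rfl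
    · rw [le_div_iff₀ (neg_pos.2 ha)]
      exact le_min (by linarith [(hy k).1]) (by linarith)
    · simp

lemma Qd_eq_convexHull :
    Qd d = convexHull ℝ (Set.Icc (-1 : Fin d → ℝ) 0 ∪ Set.Icc (0 : Fin d → ℝ) 1) :=
  Qd_subset_convexHull.antisymm <| convexHull_min
    (Set.union_subset Icc_neg_one_zero_subset_Qd Icc_zero_one_subset_Qd) convex_Qd

lemma intCast_mem_Qd_iff {p : Fin d → ℤ} :
    (fun i => (p i : ℝ)) ∈ Qd d ↔ p ∈ Set.Icc (-1) 0 ∪ Set.Icc 0 1 := by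
  constructor
  · intro hp
    obtain ⟨a, b, ha, hb, hab, hp⟩ := mem_Qd_iff.1 hp
    by_cases hpos : ∃ k, 0 < p k
    · obtain ⟨k, hk⟩ := hpos
      have hk : (1 : ℝ) ≤ p k := by exact_mod_cast hk
      refine Or.inr ⟨fun j => ?_, fun j => ?_⟩
      · have : (0 : ℝ) ≤ p j := by linarith [(hp k).2, (hp j).1]
        exact_mod_cast this
      · have : (p j : ℝ) ≤ 1 := by linarith [(hp j).2]
        exact_mod_cast this
    · push Not at hpos
      refine Or.inl ⟨fun j => ?_, hpos⟩
      have : (-1 : ℝ) ≤ p j := by linarith [(hp j).1]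
      exact_mod_cast this
  · rintro (⟨h₁, h₂⟩ | ⟨h₁, h₂⟩)
    · refine Icc_neg_one_zero_subset_Qd ⟨fun k => ?_, fun k => ?_⟩
      · simpa using (Int.cast_le (R := ℝ)).2 (h₁ k)
      · simpa using (Int.cast_le (R := ℝ)).2 (h₂ k)
    · refine Icc_zero_one_subset_Qd ⟨fun k => ?_, fun k => ?_⟩
      · simpa using (Int.cast_le (R := ℝ)).2 (h₁ k)
      · simpa using (Int.cast_le (R := ℝ)).2 (h₂ k)

lemma Qd_subset_closedBall : Qd d ⊆ Metric.closedBall 0 1 := by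
  intro y hy
  obtain ⟨a, b, ha, hb, hab, hy⟩ := mem_Qd_iff.1 hy
  rw [mem_closedBall_zero_iff, pi_norm_le_iff_of_nonneg zero_le_one]
  exact fun k => abs_le.2 ⟨by linarith [(hy k).1], by linarith [(hy k).2]⟩

lemma ball_subset_Qd : Metric.ball 0 (1 / 2) ⊆ Qd d := by
  intro y hy
  rw [mem_ball_zero_iff, pi_norm_lt_iff (by norm_num)] at hy
  refine mem_Qd_iff.2 ⟨-1 / 2, 1 / 2, by norm_num, by norm_num, by norm_num, fun k => ?_⟩
  have hk := abs_lt.1 (Real.norm_eq_abs _ ▸ hy k)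
  exact ⟨by linarith [hk.1], by linarith [hk.2]⟩

lemma intCast_mem_interior_Qd_iff {p : Fin d → ℤ} :
    (fun i => (p i : ℝ)) ∈ interior (Qd d) ↔ p = 0 := by
  constructor
  · intro hp
    have hp : (fun i => (p i : ℝ)) ∈ interior (Metric.closedBall 0 1) :=
      interior_mono Qd_subset_closedBall hp
    rw [interior_closedBall _ one_ne_zero, mem_ball_zero_iff] at hp
    exact eq_zero_of_norm_intCast_lt_one hp
  · rintro rfl
    have h0 : (fun i => ((0 : Fin d → ℤ) i : ℝ)) = 0 := by ext; simp
    rw [h0]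
    exact interior_mono ball_subset_Qd (by simp [Metric.isOpen_ball.interior_eq])

lemma neg_Qd : -Qd d = Qd d := by
  have hneg : ∀ y ∈ Qd d, -y ∈ Qd d := fun y hy => by
    obtain ⟨a, b, ha, hb, hab, hy⟩ := mem_Qd_iff.1 hy
    exact mem_Qd_iff.2 ⟨-b, -a, by linarith, by linarith, by linarith,
      fun k => ⟨neg_le_neg (hy k).2, neg_le_neg (hy k).1⟩⟩
  exact Set.Subset.antisymm (fun y hy => neg_neg y ▸ hneg _ hy)
    fun y hy => Set.mem_neg.2 (hneg y hy)

lemma neg_mem_extremePoints_Qd {y : Fin d → ℝ} (hy : y ∈ Set.extremePoints ℝ (Qd d)) :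
    -y ∈ Set.extremePoints ℝ (Qd d) := by
  have h := image_extremePoints (LinearEquiv.neg ℝ : (Fin d → ℝ) ≃ₗ[ℝ] (Fin d → ℝ)) (Qd d)
  have hneg : ⇑(LinearEquiv.neg ℝ : (Fin d → ℝ) ≃ₗ[ℝ] (Fin d → ℝ)) = Neg.neg := rfl
  rw [hneg, Set.image_neg_eq_neg, Set.image_neg_eq_neg, neg_Qd] at h
  exact h ▸ Set.neg_mem_neg.2 hy

lemma mem_extremePoints_Qd_of_mem_extremePoints_Icc {y : Fin d → ℝ}
    (hy : y ∈ Set.extremePoints ℝ (Set.Icc (0 : Fin d → ℝ) 1)) (hy0 : y ≠ 0) :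
    y ∈ Set.extremePoints ℝ (Qd d) := by
  obtain ⟨i, hi⟩ := Function.ne_iff.1 hy0
  have hyi : y i = 1 := by
    rw [extremePoints_Icc_zero_one] at hy
    exact (hy i (Set.mem_univ i)).resolve_left hi
  let F := (ContinuousLinearMap.proj i : (Fin d → ℝ) →L[ℝ] ℝ).toExposed (Qd d)
  have hyF : y ∈ F := by
    refine ⟨Icc_zero_one_subset_Qd (extremePoints_subset hy), fun z hz => ?_⟩
    obtain ⟨a, b, ha, hb, hab, hz⟩ := mem_Qd_iff.1 hz
    simp only [ContinuousLinearMap.proj_apply, hyi]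
    linarith [(hz i).2]
  have hF : F ⊆ Set.Icc 0 1 := by
    rintro x ⟨hx, hmax⟩
    obtain ⟨a, b, ha, hb, hab, hx⟩ := mem_Qd_iff.1 hx
    have hxi : 1 ≤ x i := hyi ▸ hmax y hyF.1
    refine ⟨fun k => ?_, fun k => ?_⟩
    · show 0 ≤ x k
      linarith [(hx i).2, (hx k).1]
    · show x k ≤ 1
      linarith [(hx k).2]
  exact ContinuousLinearMap.toExposed.isExposed.isExtreme.extremePoints_subset_extremePoints
    (inter_extremePoints_subset_extremePoints_of_subset hF ⟨hyF, hy⟩)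

lemma intCast_mem_extremePoints_Qd {p : Fin d → ℤ} (hp : (fun i => (p i : ℝ)) ∈ Qd d)
    (hp0 : p ≠ 0) : (fun i => (p i : ℝ)) ∈ Set.extremePoints ℝ (Qd d) := by
  have hcast : ∀ q : Fin d → ℤ, q ≠ 0 → (fun i => (q i : ℝ)) ≠ 0 := fun q hq h =>
    hq (funext fun k => by simpa using congrFun h k)
  rcases intCast_mem_Qd_iff.1 hp with ⟨h₁, h₂⟩ | hp
  · have hneg : -p ∈ Set.Icc 0 1 := ⟨neg_nonneg.2 h₂, fun k => by simpa using neg_le.1 (h₁ k)⟩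
    have hp : (fun i => (p i : ℝ)) = -fun i => ((-p) i : ℝ) := by ext; simp
    rw [hp]
    exact neg_mem_extremePoints_Qd (mem_extremePoints_Qd_of_mem_extremePoints_Icc
      (intCast_mem_extremePoints_Icc_zero_one hneg) (hcast _ (neg_ne_zero.2 hp0)))
  · exact mem_extremePoints_Qd_of_mem_extremePoints_Icc
      (intCast_mem_extremePoints_Icc_zero_one hp) (hcast p hp0)

end Qd

theorem stmt9_general (d : ℕ) :
    Qd d = convexHull ℝ (Set.Icc (-1 : Fin d → ℝ) 0 ∪ Set.Icc (0 : Fin d → ℝ) 1) ∧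
    Nat.card {p : Fin d → ℤ // (fun i => (p i : ℝ)) ∈ Qd d} = 2 ^ (d + 1) - 1 ∧
    (∀ p : Fin d → ℤ, (fun i => (p i : ℝ)) ∈ interior (Qd d) ↔ p = 0) ∧
    (∀ p : Fin d → ℤ, (fun i => (p i : ℝ)) ∈ Qd d → p ≠ 0 →
      (fun i => (p i : ℝ)) ∈ Set.extremePoints ℝ (Qd d)) := by
  refine ⟨Qd_eq_convexHull, ?_, fun _ => intCast_mem_interior_Qd_iff,
    fun _ => intCast_mem_extremePoints_Qd⟩
  calc Nat.card {p : Fin d → ℤ // (fun i => (p i : ℝ)) ∈ Qd d}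
      = Nat.card ↥(Finset.Icc (-1 : Fin d → ℤ) 0 ∪ Finset.Icc 0 1) :=
        Nat.card_congr <| Equiv.subtypeEquivRight fun p => by simp [intCast_mem_Qd_iff]
    _ = 2 ^ (d + 1) - 1 := by
        rw [Nat.card_eq_finsetCard, card_Icc_neg_one_zero_union_Icc_zero_one, Fintype.card_fin]

/-- `Q_d` is the convex hull of the union of the cubes `[-1,0]^d` and
`[0,1]^d`; it contains exactly `2^{d+1} - 1` lattice points, the origin being its unique
interior lattice point and all other `2^{d+1} - 2` lattice points being vertices. -/
theorem stmt9 (d : ℕ) (hd : 1 ≤ d) :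
    Qd d = convexHull ℝ (Set.Icc (-1 : Fin d → ℝ) 0 ∪ Set.Icc (0 : Fin d → ℝ) 1) ∧
    Nat.card {p : Fin d → ℤ // (fun i => (p i : ℝ)) ∈ Qd d} = 2 ^ (d + 1) - 1 ∧
    (∀ p : Fin d → ℤ, (fun i => (p i : ℝ)) ∈ interior (Qd d) ↔ p = 0) ∧
    (∀ p : Fin d → ℤ, (fun i => (p i : ℝ)) ∈ Qd d → p ≠ 0 →
      (fun i => (p i : ℝ)) ∈ Set.extremePoints ℝ (Qd d)) :=
  stmt9_general d
end

section
/- For every d ≥ 1, the polytope Q_d is the image of the unit cube [0,1]^{d+1} under the linear projection φ: ℝ^{d+1} → ℝ^d defined by φ(e_i) = e_i for i = 1, …, d and φ(e_{d+1}) = −e_1 − e_2 − … − e_d. Moreover, Q_d has the same h*-polynomial as the unit cube [0,1]^{d+1}, i.e., h*_i(Q_d) = h*_i([0,1]^{d+1}) for 0 ≤ i ≤ d and h*_{d+1}([0,1]^{d+1}) = 0. -/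
open scoped BigOperators Pointwise

/-!
Write `v = extCoord y = (0, y₁, …, y_d)`; then `y ∈ t • Q_d` iff all entries of `v` differ
by at most `t`. Subtracting the minimal entry turns `v` into a point of `[0, t]^{d+1}` with a
zero coordinate, and `φ` undoes this. For `t = 1` this gives `Q_d = φ([0,1]^{d+1})`; on
lattice points it gives `L_{Q_d}(t) = (t + 1)^{d+1} - t^{d+1}`, that is,
`Ehr_{Q_d} = (1 - z) Ehr_{[0,1]^{d+1}}`. In terms of the binomial expansion defining `h^*`,
this is Pascal's rule. Both sides of that expansion are polynomials in `t`, so it also holds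
at `t = 0`, and evaluated at `t = 0, 1, …` it is unitriangular in the coefficients, which
makes the `h^*`-vector unique.
-/

open Finset Polynomial

section HStar

def hStarSum {n : ℕ} (h : Fin (n + 1) → ℤ) (t : ℕ) : ℤ :=
  ∑ i : Fin (n + 1), h i * ((t + n - i).choose n : ℤ)

variable {n : ℕ}

theorem isHStarVector_iff (P : Set (Fin n → ℝ)) (h : Fin (n + 1) → ℤ) :
    IsHStarVector P h ↔ ∀ t, 1 ≤ t → (latCount P t : ℤ) = hStarSum h t :=
  Iff.rfl

theorem hStarSum_zero (h : Fin (n + 1) → ℤ) : hStarSum h 0 = h 0 := by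
  rw [hStarSum, Finset.sum_eq_single 0]
  · simp
  · intro i _ hi
    rw [Nat.choose_eq_zero_of_lt (by have := Fin.pos_iff_ne_zero.2 hi; omega)]
    simp
  · simp

/-- `n! * hStarSum h` as a polynomial in `t`, via `n! * C(m, n) = m (m - 1) ⋯ (m - n + 1)`. -/
noncomputable def hStarPoly (h : Fin (n + 1) → ℤ) : ℤ[X] :=
  ∑ i : Fin (n + 1), C (h i) * (descPochhammer ℤ n).comp (X + C ((n - i : ℕ) : ℤ))

theorem eval_hStarPoly (h : Fin (n + 1) → ℤ) (t : ℕ) :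
    (hStarPoly h).eval (t : ℤ) = n.factorial * hStarSum h t := by
  rw [hStarPoly, hStarSum, eval_finsetSum, Finset.mul_sum]
  refine Finset.sum_congr rfl fun i _ => ?_
  have hcast : (t : ℤ) + ((n - i : ℕ) : ℤ) = ((t + n - i : ℕ) : ℤ) := by
    have := i.is_le; push_cast [Nat.add_sub_assoc this]; ring
  rw [eval_mul, eval_C, eval_comp, eval_add, eval_X, eval_C, hcast,
    descPochhammer_eval_eq_descFactorial, Nat.descFactorial_eq_factorial_mul_choose]
  push_cast
  ring

theorem hStarSum_eq_eval_of_forall_one_le {h : Fin (n + 1) → ℤ} {r : ℤ[X]}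
    (hr : ∀ t : ℕ, 1 ≤ t → hStarSum h t = r.eval (t : ℤ)) (t : ℕ) :
    hStarSum h t = r.eval (t : ℤ) := by
  have hp : hStarPoly h = C (n.factorial : ℤ) * r := by
    refine eq_of_infinite_eval_eq _ _
      ((Set.Ici_infinite 1).image Nat.cast_injective.injOn |>.mono ?_)
    rintro _ ⟨s, hs, rfl⟩
    rw [Set.mem_ofPred_eq, eval_mul, eval_C, eval_hStarPoly, hr s hs]
  have := eval_hStarPoly h t
  rw [hp, eval_mul, eval_C] at this
  exact (mul_left_cancel₀ (by exact_mod_cast n.factorial_ne_zero) this).symm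

theorem hStarSum_injective : Function.Injective (hStarSum (n := n)) := by
  intro a b hab
  suffices ∀ m (hm : m < n + 1), a ⟨m, hm⟩ = b ⟨m, hm⟩ from funext fun i => this i i.isLt
  intro m
  induction m using Nat.strong_induction_on with
  | _ m ih =>
    intro hm
    -- at `t = m` the terms with `i > m` vanish and the one with `i = m` has coefficient `1`
    have key : ∑ i : Fin (n + 1), (a i - b i) * ((m + n - i).choose n : ℤ) = 0 := by
      simp only [sub_mul, Finset.sum_sub_distrib]
      exact sub_eq_zero.2 (congrFun hab m)
    rw [Finset.sum_eq_single ⟨m, hm⟩] at key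
    · simpa [sub_eq_zero] using key
    · intro i _ hi
      rcases lt_or_gt_of_ne (fun h : (i : ℕ) = m => hi (Fin.ext h)) with hlt | hgt
      · rw [ih i hlt i.isLt, sub_self, zero_mul]
      · rw [Nat.choose_eq_zero_of_lt (by omega), Nat.cast_zero, mul_zero]
    · simp

theorem hStarSum_snoc_zero_succ (h : Fin (n + 1) → ℤ) (t : ℕ) :
    hStarSum (Fin.snoc h 0 : Fin (n + 2) → ℤ) (t + 1) =
      hStarSum (Fin.snoc h 0 : Fin (n + 2) → ℤ) t + hStarSum h (t + 1) := by
  simp only [hStarSum, Fin.sum_univ_castSucc (n := n + 1), Fin.snoc_castSucc, Fin.snoc_last,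
    zero_mul, add_zero, Fin.val_castSucc]
  rw [← Finset.sum_add_distrib]
  refine Finset.sum_congr rfl fun i _ => ?_
  have := i.is_le
  rw [show t + 1 + (n + 1) - i = (t + n - i + 1) + 1 by omega,
    show t + (n + 1) - i = t + n - i + 1 by omega, show t + 1 + n - i = t + n - i + 1 by omega,
    Nat.choose_succ_succ]
  push_cast
  ring

end HStar

section Normalize

variable {ι G : Type*} [Fintype ι] [Nonempty ι] [AddCommGroup G] [LinearOrder G]

theorem sub_inf'_mem_Icc [IsOrderedAddMonoid G] {v : ι → G} {c : G}
    (hv : ∀ i j, v i - v j ≤ c) (i : ι) : v i - univ.inf' univ_nonempty v ∈ Set.Icc 0 c := by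
  obtain ⟨j, -, hj⟩ := exists_mem_eq_inf' univ_nonempty v
  exact ⟨sub_nonneg.2 (inf'_le v (mem_univ i)), hj ▸ hv i j⟩

theorem exists_sub_inf'_eq_zero (v : ι → G) : ∃ i, v i - univ.inf' univ_nonempty v = 0 := by
  obtain ⟨j, -, hj⟩ := exists_mem_eq_inf' univ_nonempty v
  exact ⟨j, hj ▸ sub_self _⟩

end Normalize

section Image

def cubeProj (d : ℕ) : (Fin (d + 1) → ℝ) →ₗ[ℝ] (Fin d → ℝ) where
  toFun x i := x i.castSucc - x (Fin.last d)
  map_add' x y := by ext; simp only [Pi.add_apply]; ring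
  map_smul' c x := by ext; simp only [Pi.smul_apply, smul_eq_mul, RingHom.id_apply]; ring

variable {d : ℕ}

@[simp]
theorem cubeProj_apply (x : Fin (d + 1) → ℝ) (i : Fin d) :
    cubeProj d x i = x i.castSucc - x (Fin.last d) := rfl

theorem cubeProj_single_castSucc (j : Fin d) :
    cubeProj d (Pi.single j.castSucc 1) = Pi.single j 1 := by
  ext i
  simp [Pi.single_apply, (Fin.castSucc_lt_last j).ne']

theorem cubeProj_single_last : cubeProj d (Pi.single (Fin.last d) 1) = -1 := by
  ext i
  simp [(Fin.castSucc_lt_last i).ne]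

theorem Qd_subset_image_Icc : Qd d ⊆ cubeProj d '' Set.Icc 0 1 := by
  intro y hy
  have hbox := sub_inf'_mem_Icc hy
  generalize univ.inf' univ_nonempty (extCoord y) = m at hbox
  -- the cube point is `extCoord y - m`, with the entry `y₀ = 0` moved to the last place
  have hx : ∀ i, (Fin.snoc (fun j => y j - m) (-m) : Fin (d + 1) → ℝ) i ∈ Set.Icc 0 1 := by
    intro i
    cases i using Fin.lastCases with
    | last => simpa [extCoord] using hbox 0
    | cast j => simpa [extCoord] using hbox j.succ
  refine ⟨_, ⟨fun i => (hx i).1, fun i => (hx i).2⟩, ?_⟩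
  ext j
  simp

theorem image_Icc_subset_Qd : cubeProj d '' Set.Icc 0 1 ⊆ Qd d := by
  rintro _ ⟨x, ⟨hx0, hx1⟩, rfl⟩ i j
  have hext : ∀ k, ∃ l, extCoord (cubeProj d x) k = x l - x (Fin.last d) := by
    intro k
    cases k using Fin.cases with
    | zero => exact ⟨Fin.last d, by simp [extCoord]⟩
    | succ k => exact ⟨k.castSucc, by simp [extCoord]⟩
  obtain ⟨l₁, h₁⟩ := hext i
  obtain ⟨l₂, h₂⟩ := hext j
  rw [h₁, h₂, sub_sub_sub_cancel_right]
  linarith [show x l₁ ≤ 1 from hx1 l₁, show 0 ≤ x l₂ from hx0 l₂]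

theorem Qd_eq_image_Icc : Qd d = cubeProj d '' Set.Icc 0 1 :=
  Qd_subset_image_Icc.antisymm image_Icc_subset_Qd

end Image

section Count

theorem card_forall_mem_Icc (n : ℕ) (a b : ℤ) :
    Nat.card {x : Fin n → ℤ // ∀ i, x i ∈ Set.Icc a b} = (b + 1 - a).toNat ^ n := by
  have : Nat.card {x : Fin n → ℤ // ∀ i, x i ∈ Set.Icc a b} =
      (Fintype.piFinset fun _ : Fin n => Finset.Icc a b).card := by
    rw [← Nat.card_eq_finsetCard]
    exact Nat.card_congr (Equiv.subtypeEquivRight fun x => by simp)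
  rw [this, Fintype.card_piFinset_const, Int.card_Icc]

theorem card_forall_mem_Icc_exists_eq_zero (n t : ℕ) :
    Nat.card {x : Fin n → ℤ // (∀ i, x i ∈ Set.Icc 0 (t : ℤ)) ∧ ∃ i, x i = 0} =
      (t + 1) ^ n - t ^ n := by
  set S := Fintype.piFinset fun _ : Fin n => Finset.Icc (0 : ℤ) t
  set T := Fintype.piFinset fun _ : Fin n => Finset.Icc (1 : ℤ) t
  have hmem (x : Fin n → ℤ) :
      ((∀ i, x i ∈ Set.Icc 0 (t : ℤ)) ∧ ∃ i, x i = 0) ↔ x ∈ S \ T := by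
    simp only [S, T, mem_sdiff, Fintype.mem_piFinset, Finset.mem_Icc, Set.mem_Icc, not_forall]
    exact and_congr_right fun h => exists_congr fun i => by have := h i; omega
  rw [Nat.card_congr (Equiv.subtypeEquivRight hmem), Nat.card_eq_finsetCard,
    card_sdiff_of_subset (Fintype.piFinset_subset _ _ fun _ => Icc_subset_Icc_left zero_le_one)]
  simp

theorem card_cons_zero_sub_le (n : ℕ) (c : ℤ) :
    Nat.card {p : Fin n → ℤ // ∀ i j,
        (Fin.cons 0 p : Fin (n + 1) → ℤ) i - (Fin.cons 0 p : Fin (n + 1) → ℤ) j ≤ c} =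
      Nat.card {x : Fin (n + 1) → ℤ // (∀ i, x i ∈ Set.Icc 0 c) ∧ ∃ i, x i = 0} := by
  have hcons (x : Fin (n + 1) → ℤ) (i : Fin (n + 1)) :
      (Fin.cons 0 (fun j => x j.succ - x 0) : Fin (n + 1) → ℤ) i = x i - x 0 := by
    cases i using Fin.cases <;> simp
  symm
  refine Nat.card_eq_of_bijective
    (fun x => ⟨fun j => x.1 j.succ - x.1 0, fun i j => ?_⟩) ⟨?_, fun p => ?_⟩
  · rw [hcons, hcons]
    linarith [(x.2.1 i).2, (x.2.1 j).1]
  · rintro ⟨x, hx, i, hi⟩ ⟨x', hx', i', hi'⟩ h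
    have hdiff (k : Fin (n + 1)) : x k - x 0 = x' k - x' 0 := by
      rw [← hcons x, ← hcons x']
      exact congrFun (congrArg (fun p => (Fin.cons 0 p : Fin (n + 1) → ℤ))
        (Subtype.ext_iff.1 h)) k
    -- `x` and `x'` differ by a constant, which vanishes since both have minimum `0`
    ext k
    linarith [hdiff k, hdiff i, hdiff i', (hx i').1, (hx' i).1]
  · set v : Fin (n + 1) → ℤ := Fin.cons 0 p.1
    refine ⟨⟨fun i => v i - univ.inf' univ_nonempty v,
      sub_inf'_mem_Icc p.2, exists_sub_inf'_eq_zero v⟩, Subtype.ext (funext fun j => ?_)⟩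
    simp [v]

variable {d : ℕ}

theorem mem_smul_Qd_iff {c : ℝ} (hc : 0 < c) (y : Fin d → ℝ) :
    y ∈ c • Qd d ↔ ∀ i j, extCoord y i - extCoord y j ≤ c := by
  have hext : extCoord (c⁻¹ • y) = c⁻¹ • extCoord y := by
    ext i; cases i using Fin.cases <;> simp [extCoord]
  simp only [Set.mem_smul_set_iff_inv_smul_mem₀ hc.ne', Qd, Set.mem_ofPred_eq, hext,
    Pi.smul_apply, smul_eq_mul, ← mul_sub, inv_mul_le_iff₀ hc, mul_one]

theorem extCoord_intCast (p : Fin d → ℤ) :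
    extCoord (fun i => (p i : ℝ)) = fun i => ((Fin.cons 0 p : Fin (d + 1) → ℤ) i : ℝ) := by
  ext i; cases i using Fin.cases <;> simp [extCoord]

theorem latCount_Qd {t : ℕ} (ht : 0 < t) :
    latCount (Qd d) t = (t + 1) ^ (d + 1) - t ^ (d + 1) := by
  rw [latCount, ← card_forall_mem_Icc_exists_eq_zero, ← card_cons_zero_sub_le]
  refine Nat.card_congr (Equiv.subtypeEquivRight fun p => ?_)
  rw [mem_smul_Qd_iff (by exact_mod_cast ht), extCoord_intCast]
  simp only
  norm_cast

theorem latCount_Icc {n t : ℕ} (ht : 0 < t) :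
    latCount (Set.Icc (0 : Fin n → ℝ) 1) t = (t + 1) ^ n := by
  rw [latCount, show (t + 1) ^ n = ((t : ℤ) + 1 - 0).toNat ^ n by simp, ← card_forall_mem_Icc]
  refine Nat.card_congr (Equiv.subtypeEquivRight fun p => ?_)
  have ht' : (0 : ℝ) < t := by exact_mod_cast ht
  rw [Set.mem_smul_set_iff_inv_smul_mem₀ ht'.ne', Set.mem_Icc, le_inv_smul_iff_of_pos ht',
    inv_smul_le_iff_of_pos ht', smul_zero, Pi.le_def, Pi.le_def, ← forall_and]
  refine forall_congr' fun i => ?_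
  simp only [Set.mem_Icc, Pi.zero_apply, Pi.smul_apply, Pi.one_apply, smul_eq_mul, mul_one]
  exact_mod_cast Iff.rfl

end Count

theorem hStarVector_Icc_eq_snoc_of_Qd {d : ℕ} {h : Fin (d + 1) → ℤ} {h' : Fin (d + 2) → ℤ}
    (hQ : IsHStarVector (Qd d) h) (hC : IsHStarVector (Set.Icc (0 : Fin (d + 1) → ℝ) 1) h') :
    h' = Fin.snoc h 0 := by
  rw [isHStarVector_iff] at hQ hC
  have hQ' (t : ℕ) : hStarSum h t = ((X + 1) ^ (d + 1) - X ^ (d + 1) : ℤ[X]).eval (t : ℤ) :=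
    hStarSum_eq_eval_of_forall_one_le (fun t ht => by
      rw [← hQ t ht, latCount_Qd ht, Nat.cast_sub (Nat.pow_le_pow_left t.le_succ _)]
      simp) t
  have hC' (t : ℕ) : hStarSum h' t = ((X + 1) ^ (d + 1) : ℤ[X]).eval (t : ℤ) :=
    hStarSum_eq_eval_of_forall_one_le (fun t ht => by
      rw [← hC t ht, latCount_Icc ht]
      simp) t
  -- summing the first differences `(t + 1)^(d+1) - t^(d+1)` telescopes
  have hsnoc (t : ℕ) :
      hStarSum (Fin.snoc h 0 : Fin (d + 2) → ℤ) t =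
        ((X + 1) ^ (d + 1) : ℤ[X]).eval (t : ℤ) := by
    induction t with
    | zero =>
      rw [hStarSum_zero, ← Fin.castSucc_zero, Fin.snoc_castSucc, ← hStarSum_zero h, hQ']
      simp
    | succ t ih => rw [hStarSum_snoc_zero_succ, ih, hQ']; simp
  exact hStarSum_injective (funext fun t => (hC' t).trans (hsnoc t).symm)

theorem stmt10_general (d : ℕ) :
    let φ : (Fin (d + 1) → ℝ) → (Fin d → ℝ) := fun x i => x i.castSucc - x (Fin.last d)
    IsLinearMap ℝ φ ∧
    (∀ i : Fin (d + 1), i ≠ Fin.last d → φ (Pi.single i 1) = fun j : Fin d => if (j : ℕ) = (i : ℕ) then 1 else 0) ∧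
    φ (Pi.single (Fin.last d) 1) = (fun _ : Fin d => -1) ∧
    Qd d = φ '' Set.Icc (0 : Fin (d + 1) → ℝ) 1 ∧
    (∀ (h : Fin (d + 1) → ℤ) (h' : Fin (d + 2) → ℤ),
      IsHStarVector (Qd d) h →
      IsHStarVector (Set.Icc (0 : Fin (d + 1) → ℝ) 1) h' →
      (∀ i : Fin (d + 1), h i = h' i.castSucc) ∧ h' (Fin.last (d + 1)) = 0) := by
  intro φ
  refine ⟨(cubeProj d).isLinear, fun i hi => ?_, cubeProj_single_last, Qd_eq_image_Icc,
    fun h h' hQ hC => ?_⟩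
  · obtain ⟨j, rfl⟩ := Fin.exists_castSucc_eq.2 hi
    change cubeProj d _ = _
    rw [cubeProj_single_castSucc]
    ext k
    simp [Pi.single_apply, Fin.val_inj]
  · obtain rfl := hStarVector_Icc_eq_snoc_of_Qd hQ hC
    simp

/-- `Q_d` is the image of the unit cube `[0,1]^{d+1}` under the linear
projection `φ` with `φ(e_i) = e_i` (`i = 1, …, d`) and `φ(e_{d+1}) = -e_1 - … - e_d`;
moreover `Q_d` has the same `h^*`-polynomial as `[0,1]^{d+1}`. -/
theorem stmt10 (d : ℕ) (hd : 1 ≤ d) :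
    let φ : (Fin (d + 1) → ℝ) → (Fin d → ℝ) := fun x i => x i.castSucc - x (Fin.last d)
    IsLinearMap ℝ φ ∧
    (∀ i : Fin (d + 1), i ≠ Fin.last d → φ (Pi.single i 1) = fun j : Fin d => if (j : ℕ) = (i : ℕ) then 1 else 0) ∧
    φ (Pi.single (Fin.last d) 1) = (fun _ : Fin d => -1) ∧
    Qd d = φ '' Set.Icc (0 : Fin (d + 1) → ℝ) 1 ∧
    (∀ (h : Fin (d + 1) → ℤ) (h' : Fin (d + 2) → ℤ),
      IsHStarVector (Qd d) h →
      IsHStarVector (Set.Icc (0 : Fin (d + 1) → ℝ) 1) h' →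
      (∀ i : Fin (d + 1), h i = h' i.castSucc) ∧ h' (Fin.last (d + 1)) = 0) :=
  stmt10_general d
end
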